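/- arXiv:2507.23460 — 3 statements merged into one kernel-verified Lean document; each statement's English description precedes it below -/
import Mathlib

section
/- The number of symmetric non-crossing partitions of [n] equals binomial(n, floor(n/2)). -/
/-- A set partition of `{1,…,n}` (as an equivalence relation on `Fin n`) is non-crossing. -/
def Noncross {n : ℕ} (s : Setoid (Fin n)) : Prop :=
  ∀ i j k l : Fin n, i < j → j < k → k < l → s i k → s j l → s i j

/-- A partition of `[n]` is `ε`-symmetric if whenever `i` and `j` lie in a common block, so
do `n+2-ε-i` and `n+2-ε-j` (mod `n`); in `0`-based coordinates, the reflection `i ↦ i'` is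
characterized by `(i + i' + ε) % n = 0`. -/
def SymmNC {n : ℕ} (ε : ℕ) (π : Setoid (Fin n)) : Prop :=
  ∀ i j i' j' : Fin n, π i j →
    (i.val + i'.val + ε) % n = 0 → (j.val + j'.val + ε) % n = 0 → π i' j'

namespace SNC

def eps (n : ℕ) : ℕ := if n % 2 = 0 then 1 else 0

lemma eps_le (n : ℕ) : eps n ≤ 1 := by unfold eps; split <;> omega

lemma eps_even {n : ℕ} (h : n % 2 = 0) : eps n = 1 := by simp [eps, h]
lemma eps_odd {n : ℕ} (h : n % 2 = 1) : eps n = 0 := by simp [eps, h]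

def rf {n : ℕ} (x : Fin n) : Fin n := ⟨(n - eps n - x.val) % n, Nat.mod_lt _ x.pos⟩

lemma rf_val_even {n : ℕ} (hn : n % 2 = 0) (x : Fin n) : (rf x).val = n - 1 - x.val := by
  have h1 := x.isLt
  have h0 : 0 < n := x.pos
  simp only [rf, eps_even hn]
  exact Nat.mod_eq_of_lt (by omega)

lemma rf_val_odd_zero {n : ℕ} (hn : n % 2 = 1) (x : Fin n) (hx : x.val = 0) :
    (rf x).val = 0 := by
  simp only [rf, eps_odd hn, hx, Nat.sub_zero]
  simp

lemma rf_val_odd_pos {n : ℕ} (hn : n % 2 = 1) (x : Fin n) (hx : 0 < x.val) :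
    (rf x).val = n - x.val := by
  have h1 := x.isLt
  simp only [rf, eps_odd hn, Nat.sub_zero]
  exact Nat.mod_eq_of_lt (by omega)

lemma rf_spec {n : ℕ} (x : Fin n) : (x.val + (rf x).val + eps n) % n = 0 := by
  have h1 := x.isLt
  have h0 : 0 < n := x.pos
  have he := eps_le n
  rcases Nat.mod_two_eq_zero_or_one n with h | h
  · rw [rf_val_even h, eps_even h]
    have : x.val + (n - 1 - x.val) + 1 = n := by omega
    rw [this, Nat.mod_self]
  · rw [eps_odd h]
    rcases Nat.eq_zero_or_pos x.val with hx | hx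
    · rw [rf_val_odd_zero h x hx, hx]; simp
    · rw [rf_val_odd_pos h x hx]
      have : x.val + (n - x.val) + 0 = n := by omega
      rw [this, Nat.mod_self]

lemma rf_unique {n : ℕ} (x y : Fin n) (h : (x.val + y.val + eps n) % n = 0) : y = rf x := by
  have h2 := rf_spec x
  have hy := y.isLt
  have hr := (rf x).isLt
  have hx := x.isLt
  have h0 : 0 < n := x.pos
  have he := eps_le n
  apply Fin.ext
  -- both y.val and (rf x).val satisfy (x+·+eps) ≡ 0 mod n and are < n
  have d1 : n ∣ (x.val + y.val + eps n) := Nat.dvd_of_mod_eq_zero h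
  have d2 : n ∣ (x.val + (rf x).val + eps n) := Nat.dvd_of_mod_eq_zero h2
  obtain ⟨a, ha⟩ := d1
  obtain ⟨b, hb⟩ := d2
  have ha2 : a ≤ 2 := by nlinarith
  have hb2 : b ≤ 2 := by nlinarith
  interval_cases a <;> interval_cases b <;> omega

lemma rf_rf {n : ℕ} (x : Fin n) : rf (rf x) = x := by
  symm
  apply rf_unique
  have := rf_spec x
  have h1 : (x.val + (rf x).val + eps n) = ((rf x).val + x.val + eps n) := by ring
  rw [← h1]
  exact this

def Symm {n : ℕ} (π : Setoid (Fin n)) : Prop := ∀ i j, π i j → π (rf i) (rf j)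

lemma symmNC_iff {n : ℕ} (π : Setoid (Fin n)) : SymmNC (eps n) π ↔ Symm π := by
  constructor
  · intro hS i j hij
    exact hS i j (rf i) (rf j) hij (rf_spec i) (rf_spec j)
  · intro hS i j i' j' hij hi hj
    rw [rf_unique i i' hi, rf_unique j j' hj]
    exact hS i j hij

def AtL {n : ℕ} (π : Setoid (Fin n)) (h : ℕ) : Prop :=
  ∃ f : Fin h → Fin n, (∀ t, π (f t) (rf (f t))) ∧ ∀ s t, s ≠ t → ¬ π (f s) (f t)

def P (n h : ℕ) (π : Setoid (Fin n)) : Prop := Noncross π ∧ Symm π ∧ AtL π h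

lemma atL_zero {n : ℕ} (π : Setoid (Fin n)) : AtL π 0 :=
  ⟨Fin.elim0, fun t => t.elim0, fun s => s.elim0⟩

instance setoidFinite {n : ℕ} : Finite (Setoid (Fin n)) := by
  have : Function.Injective (fun s : Setoid (Fin n) => s.r) := by
    intro a b h
    apply Setoid.ext; intro x y
    rw [show a.r = b.r from h]
  exact Finite.of_injective _ this

-- the "at most half" lemma
lemma le_rf_iff {n : ℕ} (x : Fin n) : x.val ≤ (rf x).val ↔ x.val < (n+1)/2 := by
  have h1 := x.isLt
  rcases Nat.mod_two_eq_zero_or_one n with h | h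
  · rw [rf_val_even h]; omega
  · rcases Nat.eq_zero_or_pos x.val with hx | hx
    · rw [rf_val_odd_zero h x hx]; omega
    · rw [rf_val_odd_pos h x hx]; omega

lemma card_P_zero {n h : ℕ} (hh : (n+1)/2 < h) :
    Nat.card {π : Setoid (Fin n) // P n h π} = 0 := by
  rw [Nat.card_eq_zero]
  left
  constructor
  rintro ⟨π, -, -, f, hf1, hf2⟩
  -- map into the half subtype
  classical
  set S := {x : Fin n // x.val < (n+1)/2} with hS
  have key : ∀ t, ∃ y : S, (y : Fin n) = f t ∨ (y : Fin n) = rf (f t) := by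
    intro t
    by_cases hc : (f t).val ≤ (rf (f t)).val
    · exact ⟨⟨f t, (le_rf_iff _).1 hc⟩, Or.inl rfl⟩
    · refine ⟨⟨rf (f t), ?_⟩, Or.inr rfl⟩
      rw [← le_rf_iff]
      rw [rf_rf]
      omega
  choose g hg using key
  have hginj : Function.Injective g := by
    intro s t hst
    by_contra hne
    apply hf2 s t hne
    have h1 := hg s
    have h2 := hg t
    rw [hst] at h1
    rcases h1 with h1 | h1 <;> rcases h2 with h2 | h2
    · have hst2 : f s = f t := by rw [← h1, h2]
      rw [hst2]
    · have hst2 : f s = rf (f t) := by rw [← h1, h2]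
      rw [hst2]; exact π.symm (hf1 t)
    · have hst2 : f t = rf (f s) := by rw [← h2, h1]
      rw [hst2]; exact hf1 s
    · have hst2 : f s = f t := by
        rw [← rf_rf (f s), ← h1, h2, rf_rf]
      rw [hst2]
  have hcard : Nat.card (Fin h) ≤ Nat.card S := Nat.card_le_card_of_injective g hginj
  have hcS : Nat.card S ≤ Nat.card (Fin ((n+1)/2)) := by
    have hi : Function.Injective (fun y : S => (⟨(y : Fin n).val, y.2⟩ : Fin ((n+1)/2))) := by
      intro a b hab
      apply Subtype.ext; apply Fin.ext
      simpa using congrArg Fin.val hab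
    exact Nat.card_le_card_of_injective _ hi
  simp only [Nat.card_eq_fintype_card, Fintype.card_fin] at hcard hcS
  omega


-- ===================== EVEN STEP: Fin (2m+2) <-> Fin (2m+1) =====================
section EvenStep

variable (m : ℕ)

def z1 : Fin (2*m+1) := ⟨0, by omega⟩
def zB : Fin (2*m+2) := ⟨0, by omega⟩
def LB : Fin (2*m+2) := ⟨2*m+1, by omega⟩

def pE (i : Fin (2*m+2)) : Fin (2*m+1) :=
  if h : i.val < 2*m+1 then ⟨i.val, h⟩ else ⟨0, by omega⟩

def eE (x : Fin (2*m+1)) : Fin (2*m+2) := ⟨x.val, by omega⟩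

variable {m}

lemma pE_val_lt {i : Fin (2*m+2)} (h : i.val < 2*m+1) : (pE m i).val = i.val := by
  simp [pE, h]

lemma pE_val_last {i : Fin (2*m+2)} (h : i.val = 2*m+1) : (pE m i).val = 0 := by
  simp [pE, h]

lemma pE_last {i : Fin (2*m+2)} (h : i.val = 2*m+1) : pE m i = z1 m :=
  Fin.ext (pE_val_last h)

lemma pE_eE (x : Fin (2*m+1)) : pE m (eE m x) = x :=
  Fin.ext (pE_val_lt x.isLt)

lemma eE_val (x : Fin (2*m+1)) : (eE m x).val = x.val := rfl

lemma rfB_val (i : Fin (2*m+2)) : (rf i).val = 2*m+1 - i.val := by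
  have := rf_val_even (n := 2*m+2) (by omega) i
  omega

lemma rfS_val_zero {x : Fin (2*m+1)} (hx : x.val = 0) : (rf x).val = 0 :=
  rf_val_odd_zero (by omega) x hx

lemma rfS_val_pos {x : Fin (2*m+1)} (hx : 0 < x.val) : (rf x).val = 2*m+1 - x.val :=
  rf_val_odd_pos (by omega) x hx

lemma pE_rf (i : Fin (2*m+2)) : pE m (rf i) = rf (pE m i) := by
  have hi := i.isLt
  apply Fin.ext
  rcases Nat.lt_or_ge i.val (2*m+1) with h | h
  · rcases Nat.eq_zero_or_pos i.val with h0 | h0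
    · rw [pE_val_last (by rw [rfB_val]; omega)]
      rw [rfS_val_zero (by rw [pE_val_lt h]; omega)]
    · rw [pE_val_lt (i := rf i) (by rw [rfB_val]; omega)]
      rw [rfB_val, rfS_val_pos (by rw [pE_val_lt h]; omega), pE_val_lt h]
  · have h' : i.val = 2*m+1 := by omega
    rw [pE_val_lt (i := rf i) (by rw [rfB_val]; omega), rfB_val, h']
    rw [rfS_val_zero (pE_val_last h')]
    omega

lemma rf_zB : rf (zB m) = LB m := Fin.ext (by rw [rfB_val]; rfl)
lemma rf_LB : rf (LB m) = zB m := Fin.ext (by rw [rfB_val]; simp [LB, zB])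
lemma rf_z1 : rf (z1 m) = z1 m := Fin.ext (by rw [rfS_val_zero rfl]; rfl)

lemma eE_rf {x : Fin (2*m+1)} (hx : 0 < x.val) : eE m (rf x) = rf (eE m x) := by
  apply Fin.ext
  rw [eE_val, rfS_val_pos hx, rfB_val, eE_val]

-- constructions
def pullE (π' : Setoid (Fin (2*m+1))) : Setoid (Fin (2*m+2)) where
  r i j := π' (pE m i) (pE m j)
  iseqv := ⟨fun _ => π'.refl _, fun h => π'.symm h, fun h1 h2 => π'.trans h1 h2⟩

def splitE (π' : Setoid (Fin (2*m+1))) : Setoid (Fin (2*m+2)) where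
  r i j := π' (pE m i) (pE m j) ∧ (π' (pE m i) (z1 m) → (i.val < m+1 ↔ j.val < m+1))
  iseqv := by
    refine ⟨fun i => ⟨π'.refl _, fun _ => Iff.rfl⟩, ?_, ?_⟩
    · rintro i j ⟨h1, h2⟩
      exact ⟨π'.symm h1, fun h0 => (h2 (π'.trans h1 h0)).symm⟩
    · rintro i j k ⟨h1, h2⟩ ⟨h3, h4⟩
      exact ⟨π'.trans h1 h3, fun h0 => (h2 h0).trans (h4 (π'.trans (π'.symm h1) h0))⟩

def Ub (π : Setoid (Fin (2*m+2))) (a : Fin (2*m+2)) : Prop := π a (zB m) ∨ π a (LB m)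

def glueE (π : Setoid (Fin (2*m+2))) : Setoid (Fin (2*m+1)) where
  r x y := π (eE m x) (eE m y) ∨ (Ub π (eE m x) ∧ Ub π (eE m y))
  iseqv := by
    refine ⟨fun x => Or.inl (π.refl _), ?_, ?_⟩
    · rintro x y (h | ⟨h1, h2⟩)
      · exact Or.inl (π.symm h)
      · exact Or.inr ⟨h2, h1⟩
    · rintro x y z (h | ⟨h1, h2⟩) (h' | ⟨h3, h4⟩)
      · exact Or.inl (π.trans h h')
      · refine Or.inr ⟨?_, h4⟩
        rcases h3 with h3 | h3
        · exact Or.inl (π.trans h h3)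
        · exact Or.inr (π.trans h h3)
      · refine Or.inr ⟨h1, ?_⟩
        rcases h2 with h2 | h2
        · exact Or.inl (π.trans (π.symm h') h2)
        · exact Or.inr (π.trans (π.symm h') h2)
      · exact Or.inr ⟨h1, h4⟩

end EvenStep


-- ===================== EVEN STEP LEMMAS =====================
section EvenLemmas

variable {m : ℕ} {π' : Setoid (Fin (2*m+1))} {π : Setoid (Fin (2*m+2))}

lemma fin_lt {n : ℕ} {a b : Fin n} (h : a.val < b.val) : a < b := h

lemma E_nc_pull (hnc : Noncross π') : Noncross (pullE π') := by
  intro i j k l h1 h2 h3 hik hjl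
  have h1' : i.val < j.val := h1
  have h2' : j.val < k.val := h2
  have h3' : k.val < l.val := h3
  have hl := l.isLt
  have hkv : k.val < 2*m+1 := by omega
  have hjv : j.val < 2*m+1 := by omega
  have hiv : i.val < 2*m+1 := by omega
  show π' (pE m i) (pE m j)
  rcases Nat.lt_or_ge l.val (2*m+1) with hlv | hlv
  · exact hnc (pE m i) (pE m j) (pE m k) (pE m l)
      (fin_lt (by rw [pE_val_lt hiv, pE_val_lt hjv]; omega))
      (fin_lt (by rw [pE_val_lt hjv, pE_val_lt hkv]; omega))
      (fin_lt (by rw [pE_val_lt hkv, pE_val_lt hlv]; omega))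
      hik hjl
  · have hlast : pE m l = z1 m := pE_last (by omega)
    have hjlr : π' (pE m j) (pE m l) := hjl
    have hikr : π' (pE m i) (pE m k) := hik
    rw [hlast] at hjlr
    rcases Nat.eq_zero_or_pos i.val with hi0 | hi0
    · have heq : pE m i = z1 m := Fin.ext (by rw [pE_val_lt hiv]; exact hi0)
      rw [heq]
      exact π'.symm hjlr
    · have hz : π' (z1 m) (pE m i) := by
        refine hnc (z1 m) (pE m i) (pE m j) (pE m k)
          (fin_lt (by rw [pE_val_lt hiv]; exact hi0))
          (fin_lt (by rw [pE_val_lt hiv, pE_val_lt hjv]; omega))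
          (fin_lt (by rw [pE_val_lt hjv, pE_val_lt hkv]; omega))
          (π'.symm hjlr) hikr
      exact π'.trans (π'.symm hz) (π'.symm hjlr)

lemma E_sym_pull (hs : Symm π') : Symm (pullE π') := by
  intro i j hij
  show π' (pE m (rf i)) (pE m (rf j))
  rw [pE_rf, pE_rf]
  exact hs _ _ hij

lemma E_nc_split (hnc : Noncross π') : Noncross (splitE π') := by
  intro i j k l h1 h2 h3 hik hjl
  have h1' : i.val < j.val := h1
  have h2' : j.val < k.val := h2
  have h3' : k.val < l.val := h3
  have hl := l.isLt
  have hkv : k.val < 2*m+1 := by omega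
  have hjv : j.val < 2*m+1 := by omega
  have hiv : i.val < 2*m+1 := by omega
  have hik' : π' (pE m i) (pE m k) ∧ (π' (pE m i) (z1 m) → (i.val < m+1 ↔ k.val < m+1)) := hik
  have hjl' : π' (pE m j) (pE m l) ∧ (π' (pE m j) (z1 m) → (j.val < m+1 ↔ l.val < m+1)) := hjl
  obtain ⟨hik1, hik2⟩ := hik'
  obtain ⟨hjl1, hjl2⟩ := hjl'
  show π' (pE m i) (pE m j) ∧ (π' (pE m i) (z1 m) → (i.val < m+1 ↔ j.val < m+1))
  rcases Nat.lt_or_ge l.val (2*m+1) with hlv | hlv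
  · -- all four below the last point
    have core : π' (pE m i) (pE m j) :=
      hnc (pE m i) (pE m j) (pE m k) (pE m l)
        (fin_lt (by rw [pE_val_lt hiv, pE_val_lt hjv]; omega))
        (fin_lt (by rw [pE_val_lt hjv, pE_val_lt hkv]; omega))
        (fin_lt (by rw [pE_val_lt hkv, pE_val_lt hlv]; omega))
        hik1 hjl1
    refine ⟨core, fun hi0 => ?_⟩
    have hA := hik2 hi0
    have hB := hjl2 (π'.trans (π'.symm core) hi0)
    omega
  · -- l is the last point
    have hlast : pE m l = z1 m := pE_last (by omega)
    rw [hlast] at hjl1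
    have hjm : ¬ (j.val < m+1) := by
      have := hjl2 hjl1
      omega
    have hiz : π' (pE m i) (z1 m) := by
      rcases Nat.eq_zero_or_pos i.val with hi0 | hi0
      · have : pE m i = z1 m := Fin.ext (by rw [pE_val_lt hiv]; exact hi0)
        rw [this]
      · refine π'.symm (hnc (z1 m) (pE m i) (pE m j) (pE m k)
          (fin_lt (by rw [pE_val_lt hiv]; exact hi0))
          (fin_lt (by rw [pE_val_lt hiv, pE_val_lt hjv]; omega))
          (fin_lt (by rw [pE_val_lt hjv, pE_val_lt hkv]; omega))
          (π'.symm hjl1) hik1)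
    have him : ¬ (i.val < m+1) := by
      have := hik2 hiz
      omega
    exact ⟨π'.trans hiz (π'.symm hjl1), fun _ => by omega⟩

lemma E_sym_split (hs : Symm π') : Symm (splitE π') := by
  rintro i j ⟨h1, h2⟩
  constructor
  · rw [pE_rf, pE_rf]; exact hs _ _ h1
  · intro h0
    rw [pE_rf] at h0
    have h0' : π' (pE m i) (z1 m) := by
      have := hs _ _ h0
      rw [rf_rf, rf_z1] at this
      exact this
    have := h2 h0'
    have hi := i.isLt
    have hj := j.isLt
    rw [rfB_val, rfB_val]
    omega

lemma E_nc_glue (hnc : Noncross π) : Noncross (glueE π) := by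
  intro x y z w h1 h2 h3 hxz hyw
  have h1' : x.val < y.val := h1
  have h2' : y.val < z.val := h2
  have h3' : z.val < w.val := h3
  have hw := w.isLt
  have hzL : (eE m z).val < (LB m).val := by simp only [eE_val]; simp only [LB]; omega
  have hwL : (eE m w).val < (LB m).val := by simp only [eE_val]; simp only [LB]; omega
  rcases hxz with hxz | ⟨hUx, hUz⟩
  · rcases hyw with hyw | ⟨hUy, hUw⟩
    · -- both real relations
      exact Or.inl (hnc (eE m x) (eE m y) (eE m z) (eE m w)
        (fin_lt h1') (fin_lt h2') (fin_lt h3') hxz hyw)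
    · -- x~z real, y,w in U
      rcases hUy with hy0 | hyL
      · -- y ~ 0
        rcases Nat.eq_zero_or_pos x.val with hx0 | hx0
        · have hxe : eE m x = zB m := Fin.ext hx0
          exact Or.inl (show π (eE m x) (eE m y) by rw [hxe]; exact π.symm hy0)
        · have hzx : π (zB m) (eE m x) :=
            hnc (zB m) (eE m x) (eE m y) (eE m z)
              (fin_lt hx0) (fin_lt h1') (fin_lt h2') (π.symm hy0) hxz
          exact Or.inl (π.trans (π.symm hzx) (π.symm hy0))
      · -- y ~ L
        exact Or.inl (hnc (eE m x) (eE m y) (eE m z) (LB m)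
          (fin_lt h1') (fin_lt h2') (fin_lt hzL) hxz hyL)
  · rcases hyw with hyw | ⟨hUy, hUw⟩
    · -- x,z in U ; y~w real
      rcases hUz with hz0 | hzL'
      · -- z ~ 0 : contradiction-ish, derive y in U
        have hy0 : 0 < y.val := by omega
        have : π (zB m) (eE m y) :=
          hnc (zB m) (eE m y) (eE m z) (eE m w)
            (fin_lt hy0) (fin_lt h2') (fin_lt h3') (π.symm hz0) hyw
        exact Or.inr ⟨hUx, Or.inl (π.symm this)⟩
      · -- z ~ L
        have : π (eE m y) (eE m z) :=
          hnc (eE m y) (eE m z) (eE m w) (LB m)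
            (fin_lt h2') (fin_lt h3') (fin_lt hwL) hyw hzL'
        exact Or.inr ⟨hUx, Or.inr (π.trans this hzL')⟩
    · exact Or.inr ⟨hUx, hUy⟩

lemma E_Ub_rf (hs : Symm π) {a : Fin (2*m+2)} (h : Ub π a) : Ub π (rf a) := by
  rcases h with h | h
  · have := hs _ _ h
    rw [rf_zB] at this
    exact Or.inr this
  · have := hs _ _ h
    rw [rf_LB] at this
    exact Or.inl this

lemma E_sym_glue (hs : Symm π) : Symm (glueE π) := by
  intro x y hxy
  have hUz : ∀ u : Fin (2*m+1), u.val = 0 → Ub π (eE m u) := by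
    intro u hu
    have : eE m u = zB m := Fin.ext hu
    rw [this]
    exact Or.inl (π.refl _)
  have key : ∀ u : Fin (2*m+1), Ub π (eE m u) → Ub π (eE m (rf u)) := by
    intro u hu
    rcases Nat.eq_zero_or_pos u.val with h0 | h0
    · rw [show rf u = u from Fin.ext (by rw [rfS_val_zero h0, h0])]
      exact hu
    · rw [eE_rf h0]
      exact E_Ub_rf hs hu
  rcases hxy with hxy | ⟨hUx, hUy⟩
  · rcases Nat.eq_zero_or_pos x.val with hx0 | hx0
    · -- x = 0 : then y related to 0, use U
      have hxe : eE m x = zB m := Fin.ext hx0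
      refine Or.inr ⟨?_, ?_⟩
      · exact hUz _ (by rw [rfS_val_zero hx0])
      · rcases Nat.eq_zero_or_pos y.val with hy0 | hy0
        · exact hUz _ (by rw [rfS_val_zero hy0])
        · rw [eE_rf hy0]
          apply E_Ub_rf hs
          rw [hxe] at hxy
          exact Or.inl (π.symm hxy)
    · rcases Nat.eq_zero_or_pos y.val with hy0 | hy0
      · have hye : eE m y = zB m := Fin.ext hy0
        refine Or.inr ⟨?_, ?_⟩
        · rw [eE_rf hx0]
          apply E_Ub_rf hs
          rw [hye] at hxy
          exact Or.inl hxy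
        · exact hUz _ (by rw [rfS_val_zero hy0])
      · exact Or.inl (show π (eE m (rf x)) (eE m (rf y)) by
          rw [eE_rf hx0, eE_rf hy0]; exact hs _ _ hxy)
  · exact Or.inr ⟨key _ hUx, key _ hUy⟩

end EvenLemmas


-- ===================== EVEN STEP ROUNDTRIPS =====================
section EvenRound

variable {m : ℕ} {π' : Setoid (Fin (2*m+1))} {π : Setoid (Fin (2*m+2))}

lemma zB_val : (zB m).val = 0 := rfl
lemma LB_val : (LB m).val = 2*m+1 := rfl
lemma pE_zB : pE m (zB m) = z1 m := Fin.ext (by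
  rw [pE_val_lt (show (zB m).val < 2*m+1 by rw [zB_val]; omega)]; rfl)
lemma pE_LB : pE m (LB m) = z1 m := pE_last rfl
lemma eE_z1 : eE m (z1 m) = zB m := rfl

lemma E_glue_pull : glueE (pullE π') = π' := by
  apply Setoid.ext
  intro x y
  show (π' (pE m (eE m x)) (pE m (eE m y)) ∨ _) ↔ _
  rw [pE_eE, pE_eE]
  constructor
  · rintro (h | ⟨h1, h2⟩)
    · exact h
    · have hUx : π' x (z1 m) := by
        rcases h1 with h | h
        · show π' x (z1 m)
          have : π' (pE m (eE m x)) (pE m (zB m)) := h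
          rwa [pE_eE, pE_zB] at this
        · have : π' (pE m (eE m x)) (pE m (LB m)) := h
          rwa [pE_eE, pE_LB] at this
      have hUy : π' y (z1 m) := by
        rcases h2 with h | h
        · have : π' (pE m (eE m y)) (pE m (zB m)) := h
          rwa [pE_eE, pE_zB] at this
        · have : π' (pE m (eE m y)) (pE m (LB m)) := h
          rwa [pE_eE, pE_LB] at this
      exact π'.trans hUx (π'.symm hUy)
  · intro h
    exact Or.inl h

lemma E_UbS_iff (x : Fin (2*m+1)) : Ub (splitE π') (eE m x) ↔ π' x (z1 m) := by
  constructor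
  · rintro (h | h)
    · have h' : π' (pE m (eE m x)) (pE m (zB m)) ∧ _ := h
      have := h'.1
      rwa [pE_eE, pE_zB] at this
    · have h' : π' (pE m (eE m x)) (pE m (LB m)) ∧ _ := h
      have := h'.1
      rwa [pE_eE, pE_LB] at this
  · intro h
    rcases Nat.lt_or_ge x.val (m+1) with hx | hx
    · refine Or.inl ⟨?_, ?_⟩
      · rw [pE_eE, pE_zB]; exact h
      · rw [pE_eE]
        intro _
        simp only [eE_val, zB_val]
        omega
    · refine Or.inr ⟨?_, ?_⟩
      · rw [pE_eE, pE_LB]; exact h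
      · rw [pE_eE]
        intro _
        simp only [eE_val, LB_val]
        omega

lemma E_glue_split : glueE (splitE π') = π' := by
  apply Setoid.ext
  intro x y
  show (splitE π' (eE m x) (eE m y) ∨ (Ub _ _ ∧ Ub _ _)) ↔ _
  rw [E_UbS_iff, E_UbS_iff]
  constructor
  · rintro (h | ⟨h1, h2⟩)
    · have h' : π' (pE m (eE m x)) (pE m (eE m y)) ∧ _ := h
      have := h'.1
      rwa [pE_eE, pE_eE] at this
    · exact π'.trans h1 (π'.symm h2)
  · intro hxy
    by_cases h0 : π' x (z1 m)
    · exact Or.inr ⟨h0, π'.trans (π'.symm hxy) h0⟩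
    · refine Or.inl ⟨?_, ?_⟩
      · rw [pE_eE, pE_eE]; exact hxy
      · rw [pE_eE]
        intro h0'
        exact absurd h0' h0

lemma E_Q_pull : (pullE π') (zB m) (LB m) := by
  show π' (pE m (zB m)) (pE m (LB m))
  rw [pE_zB, pE_LB]

lemma E_Q_split : ¬ (splitE π') (zB m) (LB m) := by
  rintro ⟨-, h2⟩
  rw [pE_zB] at h2
  have := h2 (π'.refl _)
  simp only [zB_val, LB_val] at this
  omega

lemma E_K0 (hnc : Noncross π) (hs : Symm π) (hq : ¬ π (zB m) (LB m))
    {a : Fin (2*m+2)} (ha : π a (zB m)) : a.val < m+1 := by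
  by_contra hcon
  have haL : a.val ≠ 2*m+1 := by
    intro h
    have : a = LB m := Fin.ext h
    rw [this] at ha
    exact hq (π.symm ha)
  have hav := a.isLt
  have hra : (rf a).val = 2*m+1 - a.val := rfB_val a
  have h1 : π (rf a) (LB m) := by
    have := hs _ _ ha
    rwa [rf_zB] at this
  have hcross : π (zB m) (rf a) :=
    hnc (zB m) (rf a) a (LB m)
      (fin_lt (by rw [zB_val]; omega))
      (fin_lt (by omega))
      (fin_lt (by rw [LB_val]; omega))
      (π.symm ha) h1
  exact hq (π.trans hcross h1)

lemma E_KL (hnc : Noncross π) (hs : Symm π) (hq : ¬ π (zB m) (LB m))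
    {a : Fin (2*m+2)} (ha : π a (LB m)) : m+1 ≤ a.val := by
  have h1 : π (rf a) (zB m) := by
    have := hs _ _ ha
    rwa [rf_LB] at this
  have := E_K0 hnc hs hq h1
  rw [rfB_val] at this
  have := a.isLt
  omega

lemma E_pull_glue (hq : π (zB m) (LB m)) : pullE (glueE π) = π := by
  have bridge : ∀ i : Fin (2*m+2), π (eE m (pE m i)) i := by
    intro i
    rcases Nat.lt_or_ge i.val (2*m+1) with h | h
    · have : eE m (pE m i) = i := Fin.ext (by rw [eE_val, pE_val_lt h])
      rw [this]
    · have hiv : i.val = 2*m+1 := by omega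
      have h1 : eE m (pE m i) = zB m := Fin.ext (by rw [eE_val, pE_val_last hiv]; rfl)
      have h2 : i = LB m := Fin.ext hiv
      rw [h1, h2]
      exact hq
  apply Setoid.ext
  intro i j
  show (π (eE m (pE m i)) (eE m (pE m j)) ∨
    (Ub π (eE m (pE m i)) ∧ Ub π (eE m (pE m j)))) ↔ π i j
  constructor
  · rintro (h | ⟨h1, h2⟩)
    · exact π.trans (π.symm (bridge i)) (π.trans h (bridge j))
    · have hz : ∀ a : Fin (2*m+2), Ub π a → π a (zB m) := by
        rintro a (h | h)
        · exact h
        · exact π.trans h (π.symm hq)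
      exact π.trans (π.symm (bridge i))
        (π.trans (π.trans (hz _ h1) (π.symm (hz _ h2))) (bridge j))
  · intro h
    exact Or.inl (π.trans (bridge i) (π.trans h (π.symm (bridge j))))

lemma E_split_glue (hq : ¬ π (zB m) (LB m)) (hnc : Noncross π) (hs : Symm π) :
    splitE (glueE π) = π := by
  have hK0 := fun {a} ha => E_K0 (π := π) hnc hs hq (a := a) ha
  have hKL := fun {a} ha => E_KL (π := π) hnc hs hq (a := a) ha
  have hUbz : ∀ i : Fin (2*m+2), glueE π (pE m i) (z1 m) ↔ Ub π (eE m (pE m i)) := by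
    intro i
    constructor
    · rintro (h | ⟨h1, -⟩)
      · exact Or.inl h
      · exact h1
    · intro h
      exact Or.inr ⟨h, Or.inl (π.refl _)⟩
  apply Setoid.ext
  intro i j
  show ((glueE π) (pE m i) (pE m j) ∧ ((glueE π) (pE m i) (z1 m) → (i.val < m+1 ↔ j.val < m+1)))
      ↔ π i j
  rcases Nat.lt_or_ge i.val (2*m+1) with hi | hi
  · have hei : eE m (pE m i) = i := Fin.ext (by rw [eE_val, pE_val_lt hi])
    rcases Nat.lt_or_ge j.val (2*m+1) with hj | hj
    · -- both interior
      have hej : eE m (pE m j) = j := Fin.ext (by rw [eE_val, pE_val_lt hj])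
      constructor
      · rintro ⟨(h | ⟨h1, h2⟩), hside⟩
        · rwa [hei, hej] at h
        · rw [hei] at h1
          rw [hej] at h2
          have hs' := hside ((hUbz i).2 (by rw [hei]; exact h1))
          rcases h1 with h1 | h1
          · have hi1 : i.val < m+1 := hK0 h1
            have hj1 : j.val < m+1 := by omega
            rcases h2 with h2 | h2
            · exact π.trans h1 (π.symm h2)
            · have := hKL h2
              omega
          · have hi1 : m+1 ≤ i.val := hKL h1
            rcases h2 with h2 | h2
            · have := hK0 h2
              omega
            · exact π.trans h1 (π.symm h2)
      · intro h
        refine ⟨Or.inl (by rw [hei, hej]; exact h), ?_⟩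
        intro hU
        have hU' : Ub π i := by
          have := (hUbz i).1 hU
          rwa [hei] at this
        rcases hU' with h1 | h1
        · have hi1 := hK0 h1
          have hj1 := hK0 (π.trans (π.symm h) h1)
          omega
        · have hi1 := hKL h1
          have hj1 := hKL (π.trans (π.symm h) h1)
          omega
    · -- j is the last point
      have hjv : j.val = 2*m+1 := by omega
      have hjL : j = LB m := Fin.ext hjv
      have hej : eE m (pE m j) = zB m := Fin.ext (by rw [eE_val, pE_val_last hjv]; rfl)
      constructor
      · rintro ⟨(h | ⟨h1, -⟩), hside⟩
        · rw [hei, hej] at h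
          -- π i zB; but side forces ¬ i < m+1 : contradiction resolves to π i LB
          have hs' := hside ((hUbz i).2 (by rw [hei]; exact Or.inl h))
          have := hK0 h
          omega
        · rw [hei] at h1
          have hs' := hside ((hUbz i).2 (by rw [hei]; exact h1))
          rcases h1 with h1 | h1
          · have := hK0 h1
            omega
          · rw [hjL]
            exact h1
      · intro h
        rw [hjL] at h
        have hge := hKL h
        refine ⟨Or.inr ⟨by rw [hei]; exact Or.inr h, by rw [hej]; exact Or.inl (π.refl _)⟩, ?_⟩
        intro _
        omega
  · -- i is the last point
    have hiv : i.val = 2*m+1 := by omega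
    have hiL : i = LB m := Fin.ext hiv
    have hei : eE m (pE m i) = zB m := Fin.ext (by rw [eE_val, pE_val_last hiv]; rfl)
    have hUbi : (glueE π) (pE m i) (z1 m) := (hUbz i).2 (by rw [hei]; exact Or.inl (π.refl _))
    rcases Nat.lt_or_ge j.val (2*m+1) with hj | hj
    · have hej : eE m (pE m j) = j := Fin.ext (by rw [eE_val, pE_val_lt hj])
      constructor
      · rintro ⟨(h | ⟨-, h2⟩), hside⟩
        · rw [hei, hej] at h
          have := hK0 (π.symm h)
          have hs' := hside hUbi
          omega
        · rw [hej] at h2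
          have hs' := hside hUbi
          rcases h2 with h2 | h2
          · have := hK0 h2
            omega
          · rw [hiL]
            exact π.symm h2
      · intro h
        rw [hiL] at h
        have hge := hKL (π.symm h)
        refine ⟨Or.inr ⟨by rw [hei]; exact Or.inl (π.refl _), by rw [hej]; exact Or.inr (π.symm h)⟩, ?_⟩
        intro _
        omega
    · have hjv : j.val = 2*m+1 := by omega
      have hjL : j = LB m := Fin.ext hjv
      constructor
      · intro _
        rw [hiL, hjL]
      · intro _
        have hej : eE m (pE m j) = zB m := Fin.ext (by rw [eE_val, pE_val_last hjv]; rfl)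
        refine ⟨Or.inr ⟨by rw [hei]; exact Or.inl (π.refl _), by rw [hej]; exact Or.inl (π.refl _)⟩, ?_⟩
        intro _
        omega

end EvenRound


-- ===================== EVEN STEP ATL + CARD =====================
section EvenAtl

variable {m : ℕ} {π' : Setoid (Fin (2*m+1))} {π : Setoid (Fin (2*m+2))}

lemma E_atl_pull {h : ℕ} : AtL (pullE π') h ↔ AtL π' h := by
  constructor
  · rintro ⟨f, hf1, hf2⟩
    refine ⟨fun t => pE m (f t), fun t => ?_, fun s t hst hrel => ?_⟩
    · have : π' (pE m (f t)) (pE m (rf (f t))) := hf1 t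
      rwa [pE_rf] at this
    · exact hf2 s t hst hrel
  · rintro ⟨f, hf1, hf2⟩
    refine ⟨fun t => eE m (f t), fun t => ?_, fun s t hst hrel => ?_⟩
    · show π' (pE m (eE m (f t))) (pE m (rf (eE m (f t))))
      rw [pE_rf, pE_eE]
      exact hf1 t
    · apply hf2 s t hst
      have : π' (pE m (eE m (f s))) (pE m (eE m (f t))) := hrel
      rwa [pE_eE, pE_eE] at this

lemma E_split_sympt_not_z1 {a : Fin (2*m+2)} (hsym : (splitE π') a (rf a)) :
    π' (pE m a) (rf (pE m a)) ∧ ¬ π' (pE m a) (z1 m) := by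
  obtain ⟨h1, h2⟩ := (hsym : π' (pE m a) (pE m (rf a)) ∧ _)
  rw [pE_rf] at h1
  refine ⟨h1, fun h0 => ?_⟩
  have := h2 h0
  have hv := a.isLt
  rw [rfB_val] at this
  omega

lemma E_atl_split {h : ℕ} : AtL (splitE π') h ↔ AtL π' (h+1) := by
  constructor
  · rintro ⟨f, hf1, hf2⟩
    have key := fun t => E_split_sympt_not_z1 (π' := π') (hf1 t)
    refine ⟨Fin.cons (z1 m) (fun t => pE m (f t)), fun t => ?_, fun s t hst hrel => ?_⟩
    · rcases Fin.eq_zero_or_eq_succ t with h0 | ⟨t', rfl⟩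
      · rw [h0, Fin.cons_zero, rf_z1]
      · rw [Fin.cons_succ]
        exact (key t').1
    · rcases Fin.eq_zero_or_eq_succ s with hs0 | ⟨s', rfl⟩ <;>
        rcases Fin.eq_zero_or_eq_succ t with ht0 | ⟨t', rfl⟩
      · exact hst (hs0.trans ht0.symm)
      · rw [hs0, Fin.cons_zero, Fin.cons_succ] at hrel
        exact (key t').2 (π'.symm hrel)
      · rw [ht0, Fin.cons_zero, Fin.cons_succ] at hrel
        exact (key s').2 hrel
      · rw [Fin.cons_succ, Fin.cons_succ] at hrel
        have hst' : s' ≠ t' := fun hh => hst (by rw [hh])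
        refine hf2 s' t' hst' ?_
        exact ⟨hrel, fun h0 => absurd h0 (key s').2⟩
  · rintro ⟨f, hf1, hf2⟩
    classical
    -- pick the (at most one) index whose point is related to z1
    have hex : ∃ t0 : Fin (h+1), ∀ t, t ≠ t0 → ¬ π' (f t) (z1 m) := by
      by_cases hc : ∃ t, π' (f t) (z1 m)
      · obtain ⟨t0, ht0⟩ := hc
        refine ⟨t0, fun t ht hcon => ?_⟩
        exact hf2 t t0 ht (π'.trans hcon (π'.symm ht0))
      · exact ⟨0, fun t _ hcon => hc ⟨t, hcon⟩⟩
    obtain ⟨t0, ht0⟩ := hex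
    refine ⟨fun t => eE m (f (t0.succAbove t)), fun t => ?_, fun s t hst hrel => ?_⟩
    · show π' (pE m _) (pE m (rf _)) ∧ _
      rw [pE_rf, pE_eE]
      exact ⟨hf1 _, fun h0 => absurd h0 (ht0 _ (Fin.succAbove_ne t0 t))⟩
    · obtain ⟨hrel1, -⟩ := (hrel : π' (pE m _) (pE m _) ∧ _)
      rw [pE_eE, pE_eE] at hrel1
      refine hf2 _ _ (fun hh => hst (Fin.succAbove_right_injective hh)) hrel1

lemma E_card (m h : ℕ) :
    Nat.card {π : Setoid (Fin (2*m+2)) // P (2*m+2) h π} =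
      Nat.card {π' : Setoid (Fin (2*m+1)) // P (2*m+1) h π'} +
      Nat.card {π' : Setoid (Fin (2*m+1)) // P (2*m+1) (h+1) π'} := by
  classical
  rw [← Nat.card_sum]
  apply Nat.card_congr
  refine Equiv.ofBijective ?_ ⟨?_, ?_⟩
  · exact fun x =>
      if hq : x.1 (zB m) (LB m) then
        Sum.inl ⟨glueE x.1, E_nc_glue x.2.1, E_sym_glue x.2.2.1,
          E_atl_pull.1 (by rw [E_pull_glue hq]; exact x.2.2.2)⟩
      else
        Sum.inr ⟨glueE x.1, E_nc_glue x.2.1, E_sym_glue x.2.2.1,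
          E_atl_split.1 (by rw [E_split_glue hq x.2.1 x.2.2.1]; exact x.2.2.2)⟩
  · -- injective
    rintro ⟨π1, hP1⟩ ⟨π2, hP2⟩ heq
    by_cases h1 : π1 (zB m) (LB m) <;> by_cases h2 : π2 (zB m) (LB m) <;>
      simp only [h1, h2, dite_true, dite_false] at heq
    · have hg : glueE π1 = glueE π2 := congrArg Subtype.val (Sum.inl.inj heq)
      apply Subtype.ext
      show π1 = π2
      rw [← E_pull_glue h1, ← E_pull_glue h2, hg]
    · cases heq
    · cases heq
    · have hg : glueE π1 = glueE π2 := congrArg Subtype.val (Sum.inr.inj heq)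
      apply Subtype.ext
      show π1 = π2
      rw [← E_split_glue h1 hP1.1 hP1.2.1, ← E_split_glue h2 hP2.1 hP2.2.1, hg]
  · -- surjective
    rintro (⟨π', hP⟩ | ⟨π', hP⟩)
    · refine ⟨⟨pullE π', E_nc_pull hP.1, E_sym_pull hP.2.1, E_atl_pull.2 hP.2.2⟩, ?_⟩
      have hq : (pullE π') (zB m) (LB m) := E_Q_pull
      simp only [hq, dite_true]
      congr 1
      exact Subtype.ext E_glue_pull
    · refine ⟨⟨splitE π', E_nc_split hP.1, E_sym_split hP.2.1, E_atl_split.2 hP.2.2⟩, ?_⟩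
      have hq : ¬ (splitE π') (zB m) (LB m) := E_Q_split
      simp only [hq, dite_false]
      congr 1
      exact Subtype.ext E_glue_split

end EvenAtl


-- ===================== ODD STEP =====================
section OddStep

variable (m : ℕ)

def zO : Fin (2*m+3) := ⟨0, by omega⟩
def uO (x : Fin (2*m+2)) : Fin (2*m+3) := ⟨x.val+1, by omega⟩
def dO (i : Fin (2*m+3)) : Fin (2*m+2) := ⟨i.val - 1, by omega⟩

variable {m}

lemma uO_val (x : Fin (2*m+2)) : (uO m x).val = x.val + 1 := rfl
lemma dO_val (i : Fin (2*m+3)) : (dO m i).val = i.val - 1 := rfl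
lemma zO_val : (zO m).val = 0 := rfl

lemma rfO_val_zero {i : Fin (2*m+3)} (h : i.val = 0) : (rf i).val = 0 :=
  rf_val_odd_zero (by omega) i h

lemma rfO_val_pos {i : Fin (2*m+3)} (h : 0 < i.val) : (rf i).val = 2*m+3 - i.val := by
  have := rf_val_odd_pos (n := 2*m+3) (by omega) i h
  omega

lemma rfS2_val (x : Fin (2*m+2)) : (rf x).val = 2*m+1 - x.val := by
  have := rf_val_even (n := 2*m+2) (by omega) x
  omega

lemma uO_dO {i : Fin (2*m+3)} (h : 0 < i.val) : uO m (dO m i) = i :=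
  Fin.ext (by rw [uO_val, dO_val]; omega)

lemma dO_uO (x : Fin (2*m+2)) : dO m (uO m x) = x :=
  Fin.ext (by rw [dO_val, uO_val]; omega)

lemma rf_uO (x : Fin (2*m+2)) : rf (uO m x) = uO m (rf x) := by
  apply Fin.ext
  rw [rfO_val_pos (by rw [uO_val]; omega), uO_val, uO_val, rfS2_val]
  have := x.isLt
  omega

lemma rf_zO : rf (zO m) = zO m := Fin.ext (rfO_val_zero rfl)

lemma dO_rf {i : Fin (2*m+3)} (h : 0 < i.val) : dO m (rf i) = rf (dO m i) := by
  apply Fin.ext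
  have hv := i.isLt
  rw [dO_val, rfO_val_pos h, rfS2_val, dO_val]
  omega

-- least symmetric point
open scoped Classical in
noncomputable def lS (π' : Setoid (Fin (2*m+2)))
    (hex : ∃ x : Fin (2*m+2), π' x (rf x)) : Fin (2*m+2) :=
  (Finset.univ.filter fun x => π' x (rf x)).min'
    ⟨hex.choose, by simp [hex.choose_spec]⟩

lemma lS_sym {π' : Setoid (Fin (2*m+2))} (hex : ∃ x : Fin (2*m+2), π' x (rf x)) :
    π' (lS π' hex) (rf (lS π' hex)) := by
  classical
  have := Finset.min'_mem (Finset.univ.filter fun x => π' x (rf x))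
    ⟨hex.choose, by simp [hex.choose_spec]⟩
  simp only [Finset.mem_filter] at this
  convert this.2 using 2 <;> rw [lS] <;> congr 1 <;> exact Subsingleton.elim _ _

lemma lS_le {π' : Setoid (Fin (2*m+2))} (hex : ∃ x : Fin (2*m+2), π' x (rf x))
    {x : Fin (2*m+2)} (hx : π' x (rf x)) : (lS π' hex).val ≤ x.val := by
  classical
  have := Finset.min'_le (Finset.univ.filter fun x => π' x (rf x)) x (by simp [hx])
  convert this using 2 <;> rw [lS] <;> congr 1 <;> exact Iff.rfl

-- constructions
def extO (π' : Setoid (Fin (2*m+2))) : Setoid (Fin (2*m+3)) where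
  r i j := i = j ∨ (0 < i.val ∧ 0 < j.val ∧ π' (dO m i) (dO m j))
  iseqv := by
    refine ⟨fun i => Or.inl rfl, ?_, ?_⟩
    · rintro i j (rfl | ⟨h1, h2, h3⟩)
      · exact Or.inl rfl
      · exact Or.inr ⟨h2, h1, π'.symm h3⟩
    · rintro i j k (rfl | ⟨h1, h2, h3⟩) h'
      · exact h'
      · rcases h' with rfl | ⟨h4, h5, h6⟩
        · exact Or.inr ⟨h1, h2, h3⟩
        · exact Or.inr ⟨h1, h5, π'.trans h3 h6⟩

def qO (i0 : Fin (2*m+2)) (i : Fin (2*m+3)) : Fin (2*m+2) :=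
  if i.val = 0 then i0 else dO m i

def attachO (π' : Setoid (Fin (2*m+2))) (i0 : Fin (2*m+2)) : Setoid (Fin (2*m+3)) where
  r i j := π' (qO i0 i) (qO i0 j)
  iseqv := ⟨fun _ => π'.refl _, fun h => π'.symm h, fun h1 h2 => π'.trans h1 h2⟩

def resO (π : Setoid (Fin (2*m+3))) : Setoid (Fin (2*m+2)) where
  r x y := π (uO m x) (uO m y)
  iseqv := ⟨fun _ => π.refl _, fun h => π.symm h, fun h1 h2 => π.trans h1 h2⟩

lemma qO_zero {i0 : Fin (2*m+2)} {i : Fin (2*m+3)} (h : i.val = 0) : qO i0 i = i0 := by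
  simp [qO, h]

lemma qO_pos {i0 : Fin (2*m+2)} {i : Fin (2*m+3)} (h : 0 < i.val) : qO i0 i = dO m i := by
  simp [qO, Nat.pos_iff_ne_zero.1 h]

lemma qO_uO {i0 : Fin (2*m+2)} (x : Fin (2*m+2)) : qO i0 (uO m x) = x := by
  rw [qO_pos (by rw [uO_val]; omega), dO_uO]

end OddStep


-- ===================== ODD STEP LEMMAS =====================
section OddLemmas

variable {m : ℕ} {π' : Setoid (Fin (2*m+2))} {π : Setoid (Fin (2*m+3))}

-- a block crossing the axis (in an even-size symmetric NC partition) is symmetric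
lemma E_cross (hnc : Noncross π') (hs : Symm π') {a b : Fin (2*m+2)}
    (hab : π' a b) (ha : a.val < m+1) (hb : m+1 ≤ b.val) : π' a (rf a) := by
  by_contra hcon
  have hav := a.isLt
  have hbv := b.isLt
  have hra : (rf a).val = 2*m+1 - a.val := rfS2_val a
  have hrb : (rf b).val = 2*m+1 - b.val := rfS2_val b
  have hsrel : π' (rf a) (rf b) := hs _ _ hab
  rcases Nat.lt_trichotomy a.val (rf b).val with hlt | heq | hgt
  · have h1 : π' a (rf b) :=
      hnc a (rf b) b (rf a)
        (fin_lt (by omega)) (fin_lt (by omega)) (fin_lt (by omega))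
        hab (π'.symm hsrel)
    exact hcon (π'.trans h1 (π'.symm hsrel))
  · have hba : b = rf a := by
      have h2 : rf b = a := Fin.ext (by omega)
      rw [← h2, rf_rf]
    exact hcon (hba ▸ hab)
  · have h1 : π' (rf b) a :=
      hnc (rf b) a (rf a) b
        (fin_lt (by omega)) (fin_lt (by omega)) (fin_lt (by omega))
        (π'.symm hsrel) hab
    exact hcon (π'.trans (π'.symm h1) (π'.symm hsrel))

lemma O_nc_ext : Noncross π' → Noncross (extO π') := by
  intro hnc i j k l h1 h2 h3 hik hjl
  have h1' : i.val < j.val := h1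
  have h2' : j.val < k.val := h2
  have h3' : k.val < l.val := h3
  rcases (hik : i = k ∨ _) with rfl | ⟨hi, hk, hik'⟩
  · omega
  rcases (hjl : j = l ∨ _) with rfl | ⟨hj, hl, hjl'⟩
  · omega
  refine Or.inr ⟨hi, hj, ?_⟩
  exact hnc (dO m i) (dO m j) (dO m k) (dO m l)
    (fin_lt (by rw [dO_val, dO_val]; omega))
    (fin_lt (by rw [dO_val, dO_val]; omega))
    (fin_lt (by rw [dO_val, dO_val]; omega))
    hik' hjl'

lemma O_sym_ext (hs : Symm π') : Symm (extO π') := by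
  rintro i j (rfl | ⟨hi, hj, hij⟩)
  · exact Or.inl rfl
  · refine Or.inr ⟨?_, ?_, ?_⟩
    · rw [rfO_val_pos hi]; omega
    · rw [rfO_val_pos hj]; omega
    · rw [dO_rf hi, dO_rf hj]
      exact hs _ _ hij

lemma O_nc_res (hnc : Noncross π) : Noncross (resO π) := by
  intro x y z w h1 h2 h3 hxz hyw
  exact hnc (uO m x) (uO m y) (uO m z) (uO m w)
    (fin_lt (by rw [uO_val, uO_val]; exact Nat.add_lt_add_right h1 1))
    (fin_lt (by rw [uO_val, uO_val]; exact Nat.add_lt_add_right h2 1))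
    (fin_lt (by rw [uO_val, uO_val]; exact Nat.add_lt_add_right h3 1))
    hxz hyw

lemma O_sym_res (hs : Symm π) : Symm (resO π) := by
  intro x y hxy
  show π (uO m (rf x)) (uO m (rf y))
  rw [← rf_uO, ← rf_uO]
  exact hs _ _ hxy

-- attach lemmas; i0 is the least symmetric point
section Attach

variable (hex : ∃ x : Fin (2*m+2), π' x (rf x))

lemma lS_lt_rf : (lS π' hex).val < (rf (lS π' hex)).val := by
  have h1 := lS_sym hex
  have h2 : π' (rf (lS π' hex)) (rf (rf (lS π' hex))) := by
    rw [rf_rf]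
    exact π'.symm h1
  have h3 := lS_le hex h2
  have h4 : (rf (lS π' hex)).val = 2*m+1 - (lS π' hex).val := rfS2_val _
  have h5 := (lS π' hex).isLt
  omega

lemma qO_rf_pos {i0 : Fin (2*m+2)} {i : Fin (2*m+3)} (h : 0 < i.val) :
    qO i0 (rf i) = rf (qO i0 i) := by
  have hv := i.isLt
  rw [qO_pos h, qO_pos (by rw [rfO_val_pos h]; omega), dO_rf h]

-- bridge: for every i, qO applied to reflection is equivalent to reflection of qO
lemma qO_bridge (i : Fin (2*m+3)) :
    π' (qO (lS π' hex) (rf i)) (rf (qO (lS π' hex) i)) := by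
  rcases Nat.eq_zero_or_pos i.val with h0 | h0
  · rw [qO_zero h0, qO_zero (by rw [rfO_val_zero h0])]
    exact lS_sym hex
  · rw [qO_rf_pos h0]

lemma O_sym_attach (hs : Symm π') : Symm (attachO π' (lS π' hex)) := by
  intro i j hij
  have h1 : π' (rf (qO (lS π' hex) i)) (rf (qO (lS π' hex) j)) :=
    hs _ _ (hij : π' (qO (lS π' hex) i) (qO (lS π' hex) j))
  show π' (qO (lS π' hex) (rf i)) (qO (lS π' hex) (rf j))
  exact π'.trans (qO_bridge hex i) (π'.trans h1 (π'.symm (qO_bridge hex j)))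

lemma O_nc_attach (hnc : Noncross π') (hs : Symm π') :
    Noncross (attachO π' (lS π' hex)) := by
  set i0 := lS π' hex with hi0def
  intro i j k l h1 h2 h3 hik hjl
  have h1' : i.val < j.val := h1
  have h2' : j.val < k.val := h2
  have h3' : k.val < l.val := h3
  have hlv := l.isLt
  have hik' : π' (qO i0 i) (qO i0 k) := hik
  have hjl' : π' (qO i0 j) (qO i0 l) := hjl
  show π' (qO i0 i) (qO i0 j)
  have hjpos : 0 < j.val := by omega
  have hkpos : 0 < k.val := by omega
  have hlpos : 0 < l.val := by omega
  rw [qO_pos hjpos] at hjl' ⊢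
  rw [qO_pos hkpos] at hik'
  rw [qO_pos hlpos] at hjl'
  rcases Nat.eq_zero_or_pos i.val with hi0v | hipos
  · -- i = 0 : the hard case
    rw [qO_zero hi0v] at hik' ⊢
    -- notation: x = dO j, y = dO k, z = dO l
    have hxv : (dO m j).val = j.val - 1 := dO_val j
    have hyv : (dO m k).val = k.val - 1 := dO_val k
    have hzv : (dO m l).val = l.val - 1 := dO_val l
    -- i0 is ≤ any symmetric point; y := dO k is symmetric
    have hysym : π' (dO m k) (rf (dO m k)) := by
      have ha := lS_sym hex
      have hb := hs _ _ hik'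
      -- hb : π' (rf i0) (rf (dO m k))
      exact π'.trans (π'.symm hik') (π'.trans ha hb)
    have hy_ge : i0.val ≤ (dO m k).val := lS_le hex hysym
    have hii := lS_lt_rf hex
    have hrf_i0 : (rf i0).val = 2*m+1 - i0.val := rfS2_val _
    have hi0v' := i0.isLt
    have hii' : i0.val < 2*m+1 - i0.val := by rw [← hrf_i0]; exact hii
    rcases Nat.lt_trichotomy (dO m j).val i0.val with hlt | heq | hgt
    · -- x < i0 : compare z with rf i0
      rcases Nat.lt_trichotomy (dO m l).val (2*m+1 - i0.val) with hz1 | hz2 | hz3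
      · -- z < rf i0 : crossing (x, i0, z, rf i0)
        have := hnc (dO m j) i0 (dO m l) (rf i0)
          (fin_lt (by omega)) (fin_lt (by omega)) (fin_lt (by rw [hrf_i0]; omega))
          hjl' (lS_sym hex)
        exact π'.symm this
      · -- z = rf i0
        have : dO m l = rf i0 := Fin.ext (by rw [hrf_i0]; omega)
        rw [this] at hjl'
        exact π'.trans (lS_sym hex) (π'.symm hjl')
      · -- z > rf i0 : x crosses the axis, so x is symmetric: contradicts minimality
        have hxsym : π' (dO m j) (rf (dO m j)) := by
          refine E_cross hnc hs hjl' (by omega) (by omega)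
        have := lS_le hex hxsym
        omega
    · -- x = i0
      have : dO m j = i0 := Fin.ext heq
      rw [this]
    · -- x > i0 : crossing (i0, x, y, z)
      exact hnc i0 (dO m j) (dO m k) (dO m l)
        (fin_lt (by omega)) (fin_lt (by omega)) (fin_lt (by omega))
        hik' hjl'
  · -- i ≥ 1 : everything downstairs
    rw [qO_pos hipos] at hik' ⊢
    exact hnc (dO m i) (dO m j) (dO m k) (dO m l)
      (fin_lt (by rw [dO_val, dO_val]; omega))
      (fin_lt (by rw [dO_val, dO_val]; omega))
      (fin_lt (by rw [dO_val, dO_val]; omega))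
      hik' hjl'

end Attach

end OddLemmas


-- ===================== ODD STEP ROUNDTRIPS =====================
section OddRound

variable {m : ℕ} {π' : Setoid (Fin (2*m+2))} {π : Setoid (Fin (2*m+3))}

lemma O_res_ext : resO (extO π') = π' := by
  apply Setoid.ext
  intro x y
  show (uO m x = uO m y ∨ (0 < (uO m x).val ∧ 0 < (uO m y).val ∧
      π' (dO m (uO m x)) (dO m (uO m y)))) ↔ π' x y
  rw [dO_uO, dO_uO]
  constructor
  · rintro (h | ⟨-, -, h⟩)
    · have : x = y := by
        apply Fin.ext
        have := congrArg Fin.val h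
        rw [uO_val, uO_val] at this
        omega
      rw [this]
    · exact h
  · intro h
    exact Or.inr ⟨by rw [uO_val]; omega, by rw [uO_val]; omega, h⟩

lemma O_res_attach {i0 : Fin (2*m+2)} : resO (attachO π' i0) = π' := by
  apply Setoid.ext
  intro x y
  show π' (qO i0 (uO m x)) (qO i0 (uO m y)) ↔ π' x y
  rw [qO_uO, qO_uO]

lemma O_Q_ext : ∀ j, (extO π') (zO m) j → j = zO m := by
  rintro j (h | ⟨h1, -, -⟩)
  · exact h.symm
  · rw [zO_val] at h1; omega

lemma O_Q_attach (hex : ∃ x : Fin (2*m+2), π' x (rf x)) :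
    ¬ (∀ j, (attachO π' (lS π' hex)) (zO m) j → j = zO m) := by
  intro hq
  have h1 : (attachO π' (lS π' hex)) (zO m) (uO m (lS π' hex)) := by
    show π' (qO _ (zO m)) (qO _ (uO m (lS π' hex)))
    rw [qO_zero (zO_val), qO_uO]
  have := hq _ h1
  have := congrArg Fin.val this
  rw [uO_val, zO_val] at this
  omega

lemma O_ext_res (hq : ∀ j, π (zO m) j → j = zO m) : extO (resO π) = π := by
  apply Setoid.ext
  intro i j
  show (i = j ∨ (0 < i.val ∧ 0 < j.val ∧ π (uO m (dO m i)) (uO m (dO m j)))) ↔ π i j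
  constructor
  · rintro (rfl | ⟨h1, h2, h3⟩)
    · exact π.refl _
    · rwa [uO_dO h1, uO_dO h2] at h3
  · intro h
    rcases Nat.eq_zero_or_pos i.val with hi | hi
    · have hiz : i = zO m := Fin.ext hi
      rw [hiz] at h
      have := hq _ h
      rw [this, ← hiz]
      exact Or.inl rfl
    · rcases Nat.eq_zero_or_pos j.val with hj | hj
      · have hjz : j = zO m := Fin.ext hj
        rw [hjz] at h
        have := hq _ (π.symm h)
        have : i = zO m := this
        rw [this] at hi
        rw [zO_val] at hi
        omega
      · exact Or.inr ⟨hi, hj, by rw [uO_dO hi, uO_dO hj]; exact h⟩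

-- existence of a symmetric point downstairs when 0's block is nontrivial
lemma O_hex (hnc : Noncross π) (hs : Symm π)
    (hq : ¬ ∀ j, π (zO m) j → j = zO m) : ∃ x : Fin (2*m+2), (resO π) x (rf x) := by
  push_neg at hq
  obtain ⟨j0, hj1, hj2⟩ := hq
  have hj0 : 0 < j0.val := by
    rcases Nat.eq_zero_or_pos j0.val with h | h
    · exact absurd (Fin.ext h) hj2
    · exact h
  refine ⟨dO m j0, ?_⟩
  show π (uO m (dO m j0)) (uO m (rf (dO m j0)))
  rw [uO_dO hj0, ← dO_rf hj0, uO_dO (by rw [rfO_val_pos hj0]; have := j0.isLt; omega)]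
  -- π j0 (rf j0) : via the block of 0 being symmetric
  have h1 : π (zO m) (rf j0) := by
    have := hs _ _ hj1
    rwa [rf_zO] at this
  exact π.trans (π.symm hj1) h1

-- the structure lemma
lemma O_attach_res (hnc : Noncross π) (hs : Symm π)
    (hq : ¬ ∀ j, π (zO m) j → j = zO m) (hex : ∃ x : Fin (2*m+2), (resO π) x (rf x)) :
    attachO (resO π) (lS (resO π) hex) = π := by
  classical
  set π' : Setoid (Fin (2*m+2)) := resO π with hπ'
  set i0 : Fin (2*m+2) := lS π' hex with hi0
  -- the minimum element of the block of 0 (other than 0 itself)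
  have hTne : (Finset.univ.filter fun x : Fin (2*m+2) => π (zO m) (uO m x)).Nonempty := by
    push_neg at hq
    obtain ⟨j0, hj1, hj2⟩ := hq
    have hj0 : 0 < j0.val := by
      rcases Nat.eq_zero_or_pos j0.val with h | h
      · exact absurd (Fin.ext h) hj2
      · exact h
    exact ⟨dO m j0, by simp [uO_dO hj0, hj1]⟩
  set b : Fin (2*m+2) := (Finset.univ.filter fun x : Fin (2*m+2) => π (zO m) (uO m x)).min' hTne with hb
  have hbmem : π (zO m) (uO m b) := by
    have := Finset.min'_mem _ hTne
    simp only [Finset.mem_filter] at this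
    exact this.2
  have hbmin : ∀ x : Fin (2*m+2), π (zO m) (uO m x) → b.val ≤ x.val :=
    fun x hx => Finset.min'_le _ x (by simp [hx])
  -- b is a symmetric point of π'
  have hbsym : π' b (rf b) := by
    show π (uO m b) (uO m (rf b))
    rw [← rf_uO]
    have h1 : π (zO m) (rf (uO m b)) := by
      have := hs _ _ hbmem
      rwa [rf_zO] at this
    exact π.trans (π.symm hbmem) h1
  have hi0b : i0.val ≤ b.val := lS_le hex hbsym
  -- b ≤ rf b
  have hble : b.val ≤ (rf b).val := by
    by_contra hcon
    have h1 : π (zO m) (uO m (rf b)) := by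
      rw [← rf_uO]
      have := hs _ _ hbmem
      rwa [rf_zO] at this
    have := hbmin _ h1
    omega
  -- KEY : π 0 (uO i0)
  have hKEY : π (zO m) (uO m i0) := by
    rcases Nat.lt_or_ge i0.val b.val with hlt | hge
    · -- strict : crossing (0, uO i0, uO b, rf (uO i0))
      have hi0sym : π (uO m i0) (rf (uO m i0)) := by
        rw [rf_uO]
        exact lS_sym hex
      have hrb : (rf b).val = 2*m+1 - b.val := rfS2_val b
      have hbv := b.isLt
      refine hnc (zO m) (uO m i0) (uO m b) (rf (uO m i0))
        (fin_lt (by rw [zO_val, uO_val]; omega))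
        (fin_lt (by rw [uO_val, uO_val]; omega))
        (fin_lt ?_) hbmem hi0sym
      · rw [uO_val, rf_uO, uO_val, rfS2_val]
        omega
    · have : i0 = b := Fin.ext (by omega)
      rw [this]
      exact hbmem
  -- now the setoid equality
  apply Setoid.ext
  intro i j
  show π' (qO i0 i) (qO i0 j) ↔ π i j
  have main : ∀ i : Fin (2*m+3), 0 < i.val → (π' (qO i0 (zO m)) (qO i0 i) ↔ π (zO m) i) := by
    intro i hi
    rw [qO_zero (zO_val), qO_pos hi]
    show π (uO m i0) (uO m (dO m i)) ↔ _
    rw [uO_dO hi]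
    constructor
    · intro h
      exact π.trans hKEY h
    · intro h
      exact π.trans (π.symm hKEY) h
  rcases Nat.eq_zero_or_pos i.val with hi | hi <;> rcases Nat.eq_zero_or_pos j.val with hj | hj
  · have : i = j := Fin.ext (by omega)
    rw [this]
    exact iff_of_true (π'.refl _) (π.refl _)
  · have : i = zO m := Fin.ext hi
    rw [this]
    exact main j hj
  · have : j = zO m := Fin.ext hj
    rw [this]
    constructor
    · intro h
      exact π.symm ((main i hi).1 (π'.symm h))
    · intro h
      exact π'.symm ((main i hi).2 (π.symm h))
  · rw [qO_pos hi, qO_pos hj]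
    show π (uO m (dO m i)) (uO m (dO m j)) ↔ _
    rw [uO_dO hi, uO_dO hj]

end OddRound


-- ===================== ODD STEP ATL + CARD =====================
section OddAtl

variable {m : ℕ} {π' : Setoid (Fin (2*m+2))} {π : Setoid (Fin (2*m+3))}

lemma O_atl_attach (hex : ∃ x : Fin (2*m+2), π' x (rf x)) {h : ℕ} :
    AtL (attachO π' (lS π' hex)) h ↔ AtL π' h := by
  constructor
  · rintro ⟨f, hf1, hf2⟩
    refine ⟨fun t => qO (lS π' hex) (f t), fun t => ?_, fun s t hst hrel => hf2 s t hst hrel⟩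
    have h1 : π' (qO (lS π' hex) (f t)) (qO (lS π' hex) (rf (f t))) := hf1 t
    exact π'.trans h1 (qO_bridge hex (f t))
  · rintro ⟨f, hf1, hf2⟩
    refine ⟨fun t => uO m (f t), fun t => ?_, fun s t hst hrel => ?_⟩
    · show π' (qO _ (uO m (f t))) (qO _ (rf (uO m (f t))))
      rw [rf_uO, qO_uO, qO_uO]
      exact hf1 t
    · apply hf2 s t hst
      have : π' (qO (lS π' hex) (uO m (f s))) (qO (lS π' hex) (uO m (f t))) := hrel
      rwa [qO_uO, qO_uO] at this

lemma O_atl_ext {h : ℕ} : AtL (extO π') (h+1) ↔ AtL π' h := by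
  constructor
  · rintro ⟨f, hf1, hf2⟩
    have hone : ∃ t0 : Fin (h+1), ∀ t, t ≠ t0 → 0 < (f t).val := by
      by_cases hc : ∃ t, (f t).val = 0
      · obtain ⟨t0, h0⟩ := hc
        refine ⟨t0, fun t ht => ?_⟩
        rcases Nat.eq_zero_or_pos (f t).val with hz | hp
        · exfalso
          apply hf2 t t0 ht
          have : f t = f t0 := Fin.ext (by omega)
          rw [this]
        · exact hp
      · push_neg at hc
        exact ⟨0, fun t _ => Nat.pos_of_ne_zero (hc t)⟩
    obtain ⟨t0, ht0⟩ := hone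
    refine ⟨fun t => dO m (f (t0.succAbove t)), fun t => ?_, fun s t hst hrel => ?_⟩
    · have hu : 0 < (f (t0.succAbove t)).val := ht0 _ (Fin.succAbove_ne t0 t)
      rcases (hf1 (t0.succAbove t) : _ = _ ∨ _) with heq | ⟨-, -, hrel2⟩
      · exfalso
        have := congrArg Fin.val heq
        rw [rfO_val_pos hu] at this
        have := (f (t0.succAbove t)).isLt
        omega
      · rwa [dO_rf hu] at hrel2
    · have hus : 0 < (f (t0.succAbove s)).val := ht0 _ (Fin.succAbove_ne t0 s)
      have hut : 0 < (f (t0.succAbove t)).val := ht0 _ (Fin.succAbove_ne t0 t)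
      apply hf2 _ _ (fun hh => hst (Fin.succAbove_right_injective hh))
      exact Or.inr ⟨hus, hut, hrel⟩
  · rintro ⟨f, hf1, hf2⟩
    refine ⟨Fin.cons (zO m) (fun t => uO m (f t)), fun t => ?_, fun s t hst hrel => ?_⟩
    · rcases Fin.eq_zero_or_eq_succ t with h0 | ⟨t', rfl⟩
      · rw [h0, Fin.cons_zero, rf_zO]
      · rw [Fin.cons_succ, rf_uO]
        exact Or.inr ⟨by rw [uO_val]; omega, by rw [uO_val]; omega,
          by rw [dO_uO, dO_uO]; exact hf1 t'⟩
    · rcases Fin.eq_zero_or_eq_succ s with hs0 | ⟨s', rfl⟩ <;>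
        rcases Fin.eq_zero_or_eq_succ t with ht0 | ⟨t', rfl⟩
      · exact hst (hs0.trans ht0.symm)
      · rw [hs0, Fin.cons_zero, Fin.cons_succ] at hrel
        rcases hrel with heq | ⟨hpos, -, -⟩
        · have := congrArg Fin.val heq
          rw [zO_val, uO_val] at this
          omega
        · rw [zO_val] at hpos
          omega
      · rw [ht0, Fin.cons_zero, Fin.cons_succ] at hrel
        rcases hrel with heq | ⟨-, hpos, -⟩
        · have := congrArg Fin.val heq
          rw [zO_val, uO_val] at this
          omega
        · rw [zO_val] at hpos
          omega
      · rw [Fin.cons_succ, Fin.cons_succ] at hrel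
        have hst' : s' ≠ t' := fun hh => hst (by rw [hh])
        apply hf2 s' t' hst'
        rcases hrel with heq | ⟨-, -, hrel2⟩
        · have : f s' = f t' := by
            apply Fin.ext
            have := congrArg Fin.val heq
            rw [uO_val, uO_val] at this
            omega
          rw [this]
        · rwa [dO_uO, dO_uO] at hrel2

lemma O_card (m h : ℕ) :
    Nat.card {π : Setoid (Fin (2*m+3)) // P (2*m+3) (h+1) π} =
      Nat.card {π' : Setoid (Fin (2*m+2)) // P (2*m+2) h π'} +
      Nat.card {π' : Setoid (Fin (2*m+2)) // P (2*m+2) (h+1) π'} := by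
  classical
  rw [← Nat.card_sum]
  apply Nat.card_congr
  refine Equiv.ofBijective ?_ ⟨?_, ?_⟩
  · exact fun x =>
      if hq : ∀ j, x.1 (zO m) j → j = zO m then
        Sum.inl ⟨resO x.1, O_nc_res x.2.1, O_sym_res x.2.2.1,
          O_atl_ext.1 (by rw [O_ext_res hq]; exact x.2.2.2)⟩
      else
        Sum.inr ⟨resO x.1, O_nc_res x.2.1, O_sym_res x.2.2.1,
          (O_atl_attach (O_hex x.2.1 x.2.2.1 hq)).1
            (by rw [O_attach_res x.2.1 x.2.2.1 hq (O_hex x.2.1 x.2.2.1 hq)]; exact x.2.2.2)⟩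
  · rintro ⟨π1, hP1⟩ ⟨π2, hP2⟩ heq
    dsimp only at heq
    by_cases h1 : ∀ j, π1 (zO m) j → j = zO m <;> by_cases h2 : ∀ j, π2 (zO m) j → j = zO m
    · rw [dif_pos h1, dif_pos h2] at heq
      have hg : resO π1 = resO π2 := congrArg Subtype.val (Sum.inl.inj heq)
      apply Subtype.ext
      show π1 = π2
      rw [← O_ext_res h1, ← O_ext_res h2, hg]
    · rw [dif_pos h1, dif_neg h2] at heq
      cases heq
    · rw [dif_neg h1, dif_pos h2] at heq
      cases heq
    · rw [dif_neg h1, dif_neg h2] at heq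
      have hg : resO π1 = resO π2 := congrArg Subtype.val (Sum.inr.inj heq)
      apply Subtype.ext
      show π1 = π2
      rw [← O_attach_res hP1.1 hP1.2.1 h1 (O_hex hP1.1 hP1.2.1 h1),
          ← O_attach_res hP2.1 hP2.2.1 h2 (O_hex hP2.1 hP2.2.1 h2)]
      have hsub : (⟨resO π1, O_hex hP1.1 hP1.2.1 h1⟩ :
          {s : Setoid (Fin (2*m+2)) // ∃ x, s x (rf x)}) = ⟨resO π2, O_hex hP2.1 hP2.2.1 h2⟩ :=
        Subtype.ext hg
      exact congrArg (fun p : {s : Setoid (Fin (2*m+2)) // ∃ x, s x (rf x)} =>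
        attachO p.1 (lS p.1 p.2)) hsub
  · rintro (⟨π', hP⟩ | ⟨π', hP⟩)
    · refine ⟨⟨extO π', O_nc_ext hP.1, O_sym_ext hP.2.1, O_atl_ext.2 hP.2.2⟩, ?_⟩
      dsimp only
      rw [dif_pos O_Q_ext]
      congr 1
      exact Subtype.ext O_res_ext
    · have hex : ∃ x : Fin (2*m+2), π' x (rf x) := ⟨hP.2.2.choose 0, hP.2.2.choose_spec.1 0⟩
      refine ⟨⟨attachO π' (lS π' hex), O_nc_attach hex hP.1 hP.2.1,
        O_sym_attach hex hP.2.1, (O_atl_attach hex).2 hP.2.2⟩, ?_⟩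
      dsimp only
      rw [dif_neg (O_Q_attach hex)]
      congr 1

end OddAtl

-- ===================== BASE CASE AND MAIN INDUCTION =====================

lemma card_P_one (h : ℕ) (hh : h ≤ 1) : Nat.card {π : Setoid (Fin 1) // P 1 h π} = 1 := by
  have hsub : ∀ s t : Setoid (Fin 1), s = t := by
    intro s t
    apply Setoid.ext
    intro a b
    have hab : a = b := Subsingleton.elim a b
    subst hab
    exact iff_of_true (s.refl a) (t.refl a)
  set E : Setoid (Fin 1) := ⟨fun _ _ => True,
    ⟨fun _ => trivial, fun _ => trivial, fun _ _ => trivial⟩⟩ with hE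
  have hPd : P 1 h E := by
    refine ⟨fun _ _ _ _ _ _ _ _ _ => trivial, fun _ _ _ => trivial, ?_⟩
    interval_cases h
    · exact atL_zero E
    · exact ⟨fun _ => ⟨0, by omega⟩, fun _ => trivial,
        fun s t hst => absurd (Subsingleton.elim s t) hst⟩
  haveI : Unique {π : Setoid (Fin 1) // P 1 h π} :=
    ⟨⟨⟨E, hPd⟩⟩, fun x => Subtype.ext (hsub _ _)⟩
  exact Nat.card_unique

lemma key : ∀ n, 0 < n → ∀ h, h ≤ (n+1)/2 →
    Nat.card {π : Setoid (Fin n) // P n h π} = Nat.choose n ((n+1)/2 - h) := by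
  intro n
  induction n using Nat.strong_induction_on with
  | _ n IH =>
    intro hn h hh
    rcases Nat.even_or_odd n with he | ho
    · -- n even, n = 2m+2
      obtain ⟨r, hr⟩ := he
      obtain ⟨m, rfl⟩ : ∃ m, n = 2*m+2 := ⟨r-1, by omega⟩
      have hhm : h ≤ m+1 := by omega
      rw [E_card m h]
      have IH1 := IH (2*m+1) (by omega) (by omega) h (by omega)
      rcases Nat.lt_or_ge h (m+1) with hcase | hcase
      · have IH2 := IH (2*m+1) (by omega) (by omega) (h+1) (by omega)
        rw [IH1, IH2]
        have e1 : (2*m+1+1)/2 - h = (m - h) + 1 := by omega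
        have e2 : (2*m+1+1)/2 - (h+1) = m - h := by omega
        have e3 : (2*m+2+1)/2 - h = (m - h) + 1 := by omega
        rw [e1, e2, e3]
        rw [add_comm]
        exact (Nat.choose_succ_succ (2*m+1) (m-h)).symm
      · have hhe : h = m+1 := by omega
        subst hhe
        have hz : Nat.card {π' : Setoid (Fin (2*m+1)) // P (2*m+1) (m+1+1) π'} = 0 :=
          card_P_zero (by omega)
        rw [IH1, hz]
        have e1 : (2*m+1+1)/2 - (m+1) = 0 := by omega
        have e3 : (2*m+2+1)/2 - (m+1) = 0 := by omega
        rw [e1, e3]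
        simp
    · -- n odd
      obtain ⟨r, hr⟩ := ho
      rcases Nat.eq_zero_or_pos r with hr0 | hrpos
      · -- n = 1
        have hn1 : n = 1 := by omega
        subst hn1
        rw [card_P_one h (by omega)]
        have : (1+1)/2 - h = 1 - h := by omega
        rw [this]
        rcases Nat.le_one_iff_eq_zero_or_eq_one.1 (show h ≤ 1 by omega) with rfl | rfl <;> simp
      · obtain ⟨m, rfl⟩ : ∃ m, n = 2*m+3 := ⟨r-1, by omega⟩
        have hhm : h ≤ m+2 := by omega
        -- general h ≥ 1 computation
        have main : ∀ h', h'+1 ≤ m+2 →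
            Nat.card {π : Setoid (Fin (2*m+3)) // P (2*m+3) (h'+1) π} =
              Nat.choose (2*m+3) ((2*m+3+1)/2 - (h'+1)) := by
          intro h' hh'
          rw [O_card m h']
          have IH1 := IH (2*m+2) (by omega) (by omega) h' (by omega)
          rcases Nat.lt_or_ge h' (m+1) with hcase | hcase
          · have IH2 := IH (2*m+2) (by omega) (by omega) (h'+1) (by omega)
            rw [IH1, IH2]
            have e1 : (2*m+2+1)/2 - h' = (m - h') + 1 := by omega
            have e2 : (2*m+2+1)/2 - (h'+1) = m - h' := by omega
            have e3 : (2*m+3+1)/2 - (h'+1) = (m - h') + 1 := by omega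
            rw [e1, e2, e3]
            rw [add_comm]
            exact (Nat.choose_succ_succ (2*m+2) (m-h')).symm
          · have hhe : h' = m+1 := by omega
            subst hhe
            have hz : Nat.card {π' : Setoid (Fin (2*m+2)) // P (2*m+2) (m+1+1) π'} = 0 :=
              card_P_zero (by omega)
            rw [IH1, hz]
            have e1 : (2*m+2+1)/2 - (m+1) = 0 := by omega
            have e3 : (2*m+3+1)/2 - (m+1+1) = 0 := by omega
            rw [e1, e3]
            simp
        rcases Nat.eq_zero_or_pos h with rfl | hpos
        · -- h = 0 : same set as h = 1
          have hset : ∀ π : Setoid (Fin (2*m+3)), P (2*m+3) 0 π ↔ P (2*m+3) 1 π := by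
            intro π
            constructor
            · rintro ⟨hnc, hs, -⟩
              refine ⟨hnc, hs, fun _ => zO m, fun t => ?_, fun s t hst => ?_⟩
              · rw [rf_zO]
              · exact absurd (Subsingleton.elim s t) hst
            · rintro ⟨hnc, hs, -⟩
              exact ⟨hnc, hs, atL_zero π⟩
          rw [Nat.card_congr (Equiv.subtypeEquivRight hset)]
          rw [main 0 (by omega)]
          -- C(2m+3, m+1) = C(2m+3, m+2)
          have e1 : (2*m+3+1)/2 - (0+1) = m+1 := by omega
          have e2 : (2*m+3+1)/2 - 0 = m+2 := by omega
          rw [e1, e2]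
          have := Nat.choose_symm (n := 2*m+3) (k := m+2) (by omega)
          have e3 : 2*m+3 - (m+2) = m+1 := by omega
          rw [e3] at this
          exact this
        · obtain ⟨h', rfl⟩ : ∃ h'', h = h''+1 := ⟨h-1, by omega⟩
          exact main h' (by omega)

end SNC

/-- The number of symmetric non-crossing partitions of `[n]` (with `ε = 1` for `n` even and
`ε = 0` for `n` odd) equals `C(n, ⌊n/2⌋)`. -/
theorem card_symmetric_noncrossing (n : ℕ) (hn : 0 < n) :
    Nat.card {π : Setoid (Fin n) //
        Noncross π ∧ SymmNC (if n % 2 = 0 then 1 else 0) π} =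
      Nat.choose n (n / 2) := by
  have hiff : ∀ π : Setoid (Fin n),
      (Noncross π ∧ SymmNC (if n % 2 = 0 then 1 else 0) π) ↔ SNC.P n 0 π := by
    intro π
    constructor
    · rintro ⟨h1, h2⟩
      exact ⟨h1, (SNC.symmNC_iff π).1 h2, SNC.atL_zero π⟩
    · rintro ⟨h1, h2, -⟩
      exact ⟨h1, (SNC.symmNC_iff π).2 h2⟩
  rw [Nat.card_congr (Equiv.subtypeEquivRight hiff)]
  rw [SNC.key n hn 0 (by omega)]
  have h1 : (n+1)/2 - 0 = (n+1)/2 := by omega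
  rw [h1]
  have hle : (n+1)/2 ≤ n := by omega
  have := Nat.choose_symm (n := n) (k := (n+1)/2) hle
  have h2 : n - (n+1)/2 = n/2 := by omega
  rw [h2] at this
  exact this.symm
end

section
/- Under the bijection Ψ from non-crossing partitions of [n] to chord diagrams on 2n points, the 0-symmetric non-crossing partitions correspond exactly to the chord diagrams that are symmetric under reflection in the vertical line through the middle. -/
/-- A chord diagram on `m` points: a fixed-point-free involution whose pairs (arches) are
mutually non-crossing. -/
def IsChordDiagram {m : ℕ} (M : Fin m → Fin m) : Prop :=
  Function.Involutive M ∧ (∀ x, M x ≠ x) ∧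
    ∀ a b : Fin m, a < b → b < M a → M a < M b → False

/-- The point `i` (unprimed) among the `2n` points `1, 1', 2, 2', …, n, n'`. -/
def upPt {n : ℕ} (i : Fin n) : Fin (2 * n) := ⟨2 * i.val, by have := i.isLt; omega⟩

/-- The point `i'` (primed) among the `2n` points `1, 1', 2, 2', …, n, n'`. -/
def prPt {n : ℕ} (i : Fin n) : Fin (2 * n) := ⟨2 * i.val + 1, by have := i.isLt; omega⟩

/-- `j` is the cyclic successor of `i` inside its block of `π`. -/
def CycSucc {n : ℕ} (π : Setoid (Fin n)) (i j : Fin n) : Prop :=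
  π i j ∧ ((j = i ∧ ∀ k, π i k → k = i) ∨
    (j ≠ i ∧ ∀ k, π i k → k ≠ i →
      (j.val + n - i.val) % n ≤ (k.val + n - i.val) % n))

/-- `M = Ψ(π)`: the chord diagram of `π`, with an arch from `i` to `(j-1)'` (mod `n`) for
each cyclic successor pair `(i,j)` in a block of `π`. -/
def IsPsi {n : ℕ} [NeZero n] (π : Setoid (Fin n)) (M : Fin (2 * n) → Fin (2 * n)) : Prop :=
  ∀ i j : Fin n, M (upPt i) = prPt (j - 1) ↔ CycSucc π i j

/-- A partition of `[n]` is `0`-symmetric: whenever `i ~ j` then `n+2-i ~ n+2-j` (mod `n`);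
in `0`-based coordinates the reflection `i ↦ i'` satisfies `(i + i') % n = 0`. -/
def SymmNC0 {n : ℕ} (π : Setoid (Fin n)) : Prop :=
  ∀ i j i' j' : Fin n, π i j →
    (i.val + i'.val) % n = 0 → (j.val + j'.val) % n = 0 → π i' j'

/-- The reflection of the `2n` points in the vertical line through the middle: the `k`-th
point from the left goes to the `k`-th point from the right. -/
def reflPt {n : ℕ} (x : Fin (2 * n)) : Fin (2 * n) :=
  ⟨2 * n - 1 - x.val, by have := x.isLt; omega⟩


section AuxPsi

variable {n : ℕ} [NeZero n]

private lemma psiAux_mod2 {a : ℕ} (h : a < 2 * n) :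
    a % n = if a < n then a else a - n := by
  split_ifs with h1
  · exact Nat.mod_eq_of_lt h1
  · rw [Nat.mod_eq_sub_mod (le_of_not_gt h1), Nat.mod_eq_of_lt (by omega)]

private lemma psiAux_Dcast (a b : Fin n) :
    (b.val + n - a.val) % n = (b - a).val := by
  rw [Fin.sub_def]
  congr 1
  have := a.isLt
  omega

private lemma psiAux_val_pos_of_ne {a b : Fin n} (h : a ≠ b) : 0 < (a - b).val := by
  rcases Nat.eq_zero_or_pos (a - b).val with h0 | hp
  · exact absurd (Fin.ext (by rw [h0, Fin.val_zero]) : a - b = 0)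
      (sub_ne_zero.mpr h)
  · exact hp

private lemma psiAux_add_neg_mod (a : Fin n) : (a.val + (-a : Fin n).val) % n = 0 := by
  have ha := a.isLt
  have hn : 0 < n := Nat.pos_of_ne_zero (NeZero.ne n)
  rw [Fin.neg_def]
  simp only
  rcases Nat.eq_zero_or_pos a.val with h0 | hp
  · rw [h0]; simp [Nat.mod_self]
  · rw [Nat.mod_eq_of_lt (by omega : n - a.val < n)]
    have : a.val + (n - a.val) = n := by omega
    rw [this, Nat.mod_self]

private lemma psiAux_neg_char {a b : Fin n} (h : (a.val + b.val) % n = 0) : b = -a := by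
  have ha := a.isLt
  have hb := b.isLt
  have hn : 0 < n := Nat.pos_of_ne_zero (NeZero.ne n)
  apply Fin.ext
  rw [Fin.neg_def]
  simp only
  rw [psiAux_mod2 (by omega)] at h
  rw [psiAux_mod2 (by omega)]
  split_ifs at * <;> omega

private lemma psiAux_val_neg_add_one (i : Fin n) :
    ((-(i + 1) : Fin n)).val = n - 1 - i.val := by
  have hi := i.isLt
  have hn : 0 < n := Nat.pos_of_ne_zero (NeZero.ne n)
  rw [Fin.neg_def, Fin.add_def, Fin.val_one']
  simp only
  rcases Nat.lt_or_ge 1 n with h2 | h1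
  · rw [Nat.mod_eq_of_lt (by omega : 1 < n)]
    rw [psiAux_mod2 (by omega : i.val + 1 < 2 * n)]
    split_ifs with hc
    · rw [psiAux_mod2 (by omega)]
      split_ifs <;> omega
    · have : i.val + 1 = n := by omega
      rw [this]; simp [Nat.sub_self, Nat.mod_self]
      omega
  · -- n = 1
    have hn1 : n = 1 := by omega
    subst hn1
    simp

variable {π : Setoid (Fin n)}

private lemma psiAux_exists_cycSucc (π : Setoid (Fin n)) (i : Fin n) :
    ∃ j, CycSucc π i j := by
  classical
  by_cases h : ∀ k, π i k → k = i
  · exact ⟨i, π.refl i, Or.inl ⟨rfl, h⟩⟩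
  · push_neg at h
    obtain ⟨k0, hk0, hk0i⟩ := h
    set S : Finset (Fin n) := Finset.univ.filter (fun k => π i k ∧ k ≠ i) with hS
    have hSne : S.Nonempty := ⟨k0, by simp [hS, hk0, hk0i]⟩
    obtain ⟨j, hjS, hjmin⟩ := S.exists_min_image (fun k => (k.val + n - i.val) % n) hSne
    simp only [hS, Finset.mem_filter, Finset.mem_univ, true_and] at hjS
    refine ⟨j, hjS.1, Or.inr ⟨hjS.2, fun k hk hki => ?_⟩⟩
    exact hjmin k (by simp [hS, hk, hki])

private lemma psiAux_succ_min_right {i j : Fin n} (h : CycSucc π i j) {m : Fin n}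
    (hm : π i m) (hmj : m ≠ j) : (j - i).val ≤ (j - m).val := by
  obtain ⟨hij, hcase⟩ := h
  rcases hcase with ⟨rfl, hall⟩ | ⟨hne, hmin⟩
  · exact absurd (hall m hm) hmj
  · by_cases hmi : m = i
    · subst hmi; exact le_refl _
    · have h1 : (j - i).val ≤ (m - i).val := by
        have := hmin m hm hmi
        rwa [psiAux_Dcast, psiAux_Dcast] at this
      by_contra hlt
      push_neg at hlt
      have hle : (j - m) ≤ (j - i) := by rw [Fin.le_def]; omega
      have heq : m - i = (j - i) - (j - m) := by abel
      have h2 : (m - i).val = (j - i).val - (j - m).val := by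
        rw [heq, Fin.sub_val_of_le hle]
      have h3 : 0 < (j - m).val := psiAux_val_pos_of_ne (Ne.symm hmj)
      have h4 : 0 < (j - i).val := psiAux_val_pos_of_ne hne
      omega

private lemma psiAux_cycSucc_neg (hs : ∀ a b : Fin n, π a b → π (-a) (-b))
    {i j : Fin n} (h : CycSucc π i j) : CycSucc π (-j) (-i) := by
  obtain ⟨hij, hcase⟩ := h
  refine ⟨hs j i (π.symm hij), ?_⟩
  rcases hcase with ⟨rfl, hall⟩ | ⟨hne, hmin⟩
  · refine Or.inl ⟨rfl, fun k hk => ?_⟩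
    have h1 := hs _ _ hk
    rw [neg_neg] at h1
    have h2 := hall (-k) h1
    rw [← neg_neg k, h2]
  · refine Or.inr ⟨fun hc => hne (neg_injective hc).symm, fun k hk hkne => ?_⟩
    rw [psiAux_Dcast, psiAux_Dcast]
    have e1 : (-i) - (-j) = j - i := by abel
    have e2 : k - (-j) = j - (-k) := by abel
    rw [e1, e2]
    have h1 := hs _ _ hk
    rw [neg_neg] at h1
    refine psiAux_succ_min_right ⟨hij, Or.inr ⟨hne, hmin⟩⟩ (π.trans hij h1) ?_
    intro hc
    exact hkne (by rw [← neg_neg k, hc])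

private lemma psiAux_neg_of_arch
    (h : ∀ i j : Fin n, CycSucc π i j → CycSucc π (-j) (-i)) :
    ∀ a b : Fin n, π a b → π (-a) (-b) := by
  suffices H : ∀ d : ℕ, ∀ a b : Fin n, (b - a).val = d → π a b → π (-a) (-b) by
    intro a b hab
    exact H _ a b rfl hab
  intro d
  induction d using Nat.strong_induction_on with
  | _ d ih =>
    intro a b hd hab
    by_cases hba : b = a
    · subst hba; exact π.refl _
    · obtain ⟨s, hs⟩ := psiAux_exists_cycSucc π a
      obtain ⟨has, hcase⟩ := hs
      have hcase' : s ≠ a ∧ ∀ k, π a k → k ≠ a → (s - a).val ≤ (k - a).val := by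
        rcases hcase with ⟨_, hall⟩ | ⟨h1, h2⟩
        · exact absurd (hall b hab) hba
        · exact ⟨h1, fun k hk hka => by
            have := h2 k hk hka; rwa [psiAux_Dcast, psiAux_Dcast] at this⟩
      have hmin := hcase'.2 b hab hba
      have hspos : 0 < (s - a).val := psiAux_val_pos_of_ne hcase'.1
      have hdpos : 0 < d := hd ▸ psiAux_val_pos_of_ne hba
      have hle : (s - a) ≤ (b - a) := by rw [Fin.le_def]; omega
      have heq : b - s = (b - a) - (s - a) := by abel
      have hval : (b - s).val = d - (s - a).val := by
        rw [heq, Fin.sub_val_of_le hle, hd]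
      have hlt : (b - s).val < d := by omega
      have h1 : π (-s) (-a) := (h a s ⟨has, hcase⟩).1
      have h2 : π s b := π.trans (π.symm has) hab
      have h3 : π (-s) (-b) := ih _ hlt s b rfl h2
      exact π.trans (π.symm h1) h3

private lemma psiAux_symm_iff :
    SymmNC0 π ↔ ∀ a b : Fin n, π a b → π (-a) (-b) := by
  constructor
  · intro hs a b hab
    exact hs a b (-a) (-b) hab (psiAux_add_neg_mod a) (psiAux_add_neg_mod b)
  · intro hs i j i' j' hij hi hj
    have hi' : i' = -i := psiAux_neg_char hi
    have hj' : j' = -j := psiAux_neg_char hj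
    rw [hi', hj']
    exact hs i j hij

private lemma psiAux_upPt_inj : Function.Injective (upPt (n := n)) := by
  intro a b hab
  have : (upPt a).val = (upPt b).val := by rw [hab]
  simp only [upPt] at this
  exact Fin.ext (by omega)

private lemma psiAux_refl_up (i : Fin n) : reflPt (upPt i) = prPt (-(i + 1)) := by
  have hi := i.isLt
  apply Fin.ext
  simp only [reflPt, upPt, prPt, psiAux_val_neg_add_one]
  omega

private lemma psiAux_refl_pr (k : Fin n) : reflPt (prPt k) = upPt (-(k + 1)) := by
  have hk := k.isLt
  apply Fin.ext
  simp only [reflPt, upPt, prPt, psiAux_val_neg_add_one]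
  omega

private lemma psiAux_up_or_pr (x : Fin (2 * n)) :
    (∃ i : Fin n, x = upPt i) ∨ (∃ k : Fin n, x = prPt k) := by
  have hx := x.isLt
  rcases Nat.even_or_odd x.val with ⟨c, hc⟩ | ⟨c, hc⟩
  · exact Or.inl ⟨⟨c, by omega⟩, Fin.ext (by simp only [upPt]; omega)⟩
  · exact Or.inr ⟨⟨c, by omega⟩, Fin.ext (by simp only [prPt]; omega)⟩

end AuxPsi

/-- Under the bijection `Ψ` from non-crossing partitions of `[n]` to chord diagrams on `2n`
points, the `0`-symmetric non-crossing partitions correspond exactly to the chord diagrams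
symmetric under reflection in the vertical middle line. -/
theorem psi_symmetric_iff (n : ℕ) [NeZero n]
    (π : Setoid (Fin n)) (M : Fin (2 * n) → Fin (2 * n))
    (hπ : Noncross π) (hM : IsChordDiagram M) (hΨ : IsPsi π M) :
    SymmNC0 π ↔ ∀ x, M (reflPt x) = reflPt (M x) := by
  classical
  obtain ⟨cs, hcs⟩ : ∃ cs : Fin n → Fin n, ∀ i, CycSucc π i (cs i) :=
    ⟨fun i => (psiAux_exists_cycSucc π i).choose,
     fun i => (psiAux_exists_cycSucc π i).choose_spec⟩
  have hMup : ∀ i, M (upPt i) = prPt (cs i - 1) := fun i => (hΨ i (cs i)).mpr (hcs i)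
  have hsurj : ∀ k : Fin n, ∃ i, M (upPt i) = prPt k := by
    have hginj : Function.Injective (fun i => cs i - 1) := by
      intro a b hab
      simp only at hab
      have h1 : M (upPt a) = M (upPt b) := by rw [hMup, hMup, hab]
      exact psiAux_upPt_inj (hM.1.injective h1)
    have hgsurj := Finite.injective_iff_surjective.mp hginj
    intro k
    obtain ⟨i, hi⟩ := hgsurj k
    exact ⟨i, by rw [hMup]; exact congrArg prPt hi⟩
  constructor
  · intro hs x
    have hs' := psiAux_symm_iff.mp hs
    have key : ∀ i : Fin n, M (reflPt (upPt i)) = reflPt (M (upPt i)) := by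
      intro i
      have hcn : CycSucc π (-(cs i)) (-i) := psiAux_cycSucc_neg hs' (hcs i)
      have h1 : M (upPt (-(cs i))) = prPt (-i - 1) := (hΨ _ _).mpr hcn
      have e1 : reflPt (upPt i) = prPt (-i - 1) := by
        rw [psiAux_refl_up]; congr 1; abel
      rw [e1, ← h1, hM.1 (upPt (-(cs i))), hMup, psiAux_refl_pr]
      congr 1; abel
    rcases psiAux_up_or_pr x with ⟨i, rfl⟩ | ⟨k, rfl⟩
    · exact key i
    · obtain ⟨i, hi⟩ := hsurj k
      have hMk : M (prPt k) = upPt i := by rw [← hi]; exact hM.1 _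
      have hck : CycSucc π i (k + 1) := (hΨ i (k + 1)).mp (by rw [hi]; congr 1; abel)
      have hcn : CycSucc π (-(k + 1)) (-i) := psiAux_cycSucc_neg hs' hck
      have h1 : M (upPt (-(k + 1))) = prPt (-i - 1) := (hΨ _ _).mpr hcn
      rw [psiAux_refl_pr, hMk, psiAux_refl_up, h1]
      congr 1; abel
  · intro hsym
    have harch : ∀ i j : Fin n, CycSucc π i j → CycSucc π (-j) (-i) := by
      intro i j hc
      have h1 : M (upPt i) = prPt (j - 1) := (hΨ i j).mpr hc
      have h2 : M (prPt (j - 1)) = upPt i := by rw [← h1]; exact hM.1 _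
      have h3 := hsym (prPt (j - 1))
      rw [h2, psiAux_refl_pr, psiAux_refl_up] at h3
      have e1 : -(j - 1 + 1) = -j := by abel
      rw [e1] at h3
      have h4 : M (upPt (-j)) = prPt ((-i) - 1) := by rw [h3]; congr 1; abel
      exact (hΨ _ _).mp h4
    exact psiAux_symm_iff.mpr (psiAux_neg_of_arch harch)
end

section
/- With r_1(w) = τ^{-1}(w−1) and r_2(w) = w(w−1)/(τ^2−1−w), the operator R_i(w) = 1 + r_1(w) E_i^{(1)} + r_2(w) E_i^{(2)} satisfies the Yang–Baxter equation R_i(w) R_{i+1}(wz) R_i(z) = R_{i+1}(z) R_i(wz) R_{i+1}(w) in the Fuss–Catalan algebra with r = 2. -/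
/-- The `R`-matrix `R(u) = 1 + r₁(u) E^{(1)} + r₂(u) E^{(2)}` with Di Francesco's weights
`r₁(u) = τ⁻¹(u-1)` and `r₂(u) = u(u-1)/(τ²-1-u)`, at a site with Fuss–Catalan generators
`x₁ = E^{(1)}`, `x₂ = E^{(2)}`. -/
noncomputable def Rmat {F A : Type*} [Field F] [Ring A] [Algebra F A]
    (τ : F) (x1 x2 : A) (u : F) : A :=
  1 + (τ⁻¹ * (u - 1)) • x1 + (u * (u - 1) / (τ ^ 2 - 1 - u)) • x2

private theorem smul_cancel_aux {F A : Type*} [Field F] [Ring A] [Algebra F A]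
    (τ : F) (x y : A) (h : τ ≠ 0) (he : τ • x = τ • y) : x = y := by
  have := congrArg (τ⁻¹ • ·) he
  simpa [smul_smul, inv_mul_cancel₀ h] using this

set_option maxHeartbeats 4000000 in
/-- With `r₁(w) = τ⁻¹(w−1)`, `r₂(w) = w(w−1)/(τ²−1−w)`, the operator
`R_i(w) = 1 + r₁(w)E_i^{(1)} + r₂(w)E_i^{(2)}` satisfies the Yang–Baxter equation
`R_i(w) R_{i+1}(wz) R_i(z) = R_{i+1}(z) R_i(wz) R_{i+1}(w)` in the Fuss–Catalan algebra
with `r = 2`.  Here `a₁, a₂` are `E_i^{(1)}, E_i^{(2)}` and `b₁, b₂` are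
`E_{i+1}^{(1)}, E_{i+1}^{(2)}`, subject to the Fuss–Catalan relations of order up to
three for two adjacent sites. -/
theorem fussCatalan_yang_baxter {F A : Type*} [Field F] [Ring A] [Algebra F A]
    (τ w z : F) (a1 a2 b1 b2 : A)
    (hτ : τ ≠ 0) (hw : τ ^ 2 - 1 - w ≠ 0) (hz : τ ^ 2 - 1 - z ≠ 0)
    (hwz : τ ^ 2 - 1 - w * z ≠ 0)
    -- relations of order two at each site: E^{(s)}E^{(s')} = τ^{min(s,s')}E^{(max(s,s'))}
    (ha11 : a1 * a1 = τ • a1) (ha12 : a1 * a2 = τ • a2)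
    (ha21 : a2 * a1 = τ • a2) (ha22 : a2 * a2 = (τ ^ 2) • a2)
    (hb11 : b1 * b1 = τ • b1) (hb12 : b1 * b2 = τ • b2)
    (hb21 : b2 * b1 = τ • b2) (hb22 : b2 * b2 = (τ ^ 2) • b2)
    -- commutation for adjacent sites when s + s' ≤ r = 2
    (hcomm : a1 * b1 = b1 * a1)
    -- order-three relations E_i^{(2)} E_{i±1}^{(s')} E_i^{(2)} = τ^{2-s'} E_i^{(2)}
    (haba1 : a2 * b1 * a2 = τ • a2) (haba2 : a2 * b2 * a2 = a2)
    (hbab1 : b2 * a1 * b2 = τ • b2) (hbab2 : b2 * a2 * b2 = b2)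
    -- remaining order-three relations, e.g. E_i^{(1)}E_{i+1}^{(2)}E_i^{(1)} = E_{i+1}^{(1)}E_i^{(1)}
    (h111 : a1 * b1 * a1 = τ • (b1 * a1)) (h121 : a1 * b2 * a1 = b1 * a1)
    (h111' : b1 * a1 * b1 = τ • (a1 * b1)) (h121' : b1 * a2 * b1 = a1 * b1) :
    Rmat τ a1 a2 w * Rmat τ b1 b2 (w * z) * Rmat τ a1 a2 z =
      Rmat τ b1 b2 z * Rmat τ a1 a2 (w * z) * Rmat τ b1 b2 w := by
  -- normalisation of the mixed-site pair b1*a1 to a1*b1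
  have hba1 : b1 * a1 = a1 * b1 := hcomm.symm
  -- derived order-three reductions (right-associated form)
  have L11 : a1 * (a1 * b1) = τ • (a1 * b1) := by
    rw [← mul_assoc, ha11, smul_mul_assoc]
  have L12 : a1 * (b1 * a2) = τ • (b1 * a2) := by
    rw [← mul_assoc, hcomm, mul_assoc, ha12, mul_smul_comm]
  have L13 : a1 * (b2 * a1) = a1 * b1 := by
    rw [← mul_assoc, h121, hba1]
  have L14 : a1 * (b2 * a2) = b1 * a2 := by
    refine smul_cancel_aux τ _ _ hτ ?_
    have h := congrArg (· * a2) h121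
    simp only [mul_assoc] at h
    rw [ha12, mul_smul_comm, mul_smul_comm] at h
    simpa [mul_assoc] using h
  have L21 : a2 * (a1 * b1) = τ • (a2 * b1) := by
    rw [← mul_assoc, ha21, smul_mul_assoc]
  have L22 : a2 * (b1 * a2) = τ • a2 := by
    rw [← mul_assoc]; exact haba1
  have L23 : a2 * (b2 * a1) = a2 * b1 := by
    refine smul_cancel_aux τ _ _ hτ ?_
    rw [← smul_mul_assoc, ← smul_mul_assoc, ← ha21, mul_assoc, mul_assoc,
      ← mul_assoc a1, h121, hba1]
  have L24 : a2 * (b2 * a2) = a2 := by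
    rw [← mul_assoc]; exact haba2
  have R11 : b1 * (a1 * b1) = τ • (a1 * b1) := by
    rw [← mul_assoc, h111']
  have R12 : b1 * (a1 * b2) = τ • (a1 * b2) := by
    rw [← mul_assoc, ← hcomm, mul_assoc, hb12, mul_smul_comm]
  have R13 : b1 * (a2 * b1) = a1 * b1 := by
    rw [← mul_assoc, h121']
  have R14 : b1 * (a2 * b2) = a1 * b2 := by
    refine smul_cancel_aux τ _ _ hτ ?_
    have h := congrArg (· * b2) h121'
    simp only [mul_assoc] at h
    rw [hb12, mul_smul_comm, mul_smul_comm] at h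
    simpa [mul_assoc] using h
  have R21 : b2 * (a1 * b1) = τ • (b2 * a1) := by
    rw [hcomm, ← mul_assoc, hb21, smul_mul_assoc]
  have R22 : b2 * (a1 * b2) = τ • b2 := by
    rw [← mul_assoc]; exact hbab1
  have R23 : b2 * (a2 * b1) = b2 * a1 := by
    refine smul_cancel_aux τ _ _ hτ ?_
    rw [← smul_mul_assoc, ← smul_mul_assoc, ← hb21, mul_assoc, mul_assoc,
      ← mul_assoc b1, h121', hcomm]
  have R24 : b2 * (a2 * b2) = b2 := by
    rw [← mul_assoc]; exact hbab2
  -- Scale each `Rmat` factor by `τ * (τ² - 1 - u)`, so that all coefficients become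
  -- polynomial in `τ, w, z`.
  have expand : ∀ (u : F), τ ^ 2 - 1 - u ≠ 0 → ∀ x1 x2 : A,
      (τ * (τ ^ 2 - 1 - u)) • Rmat τ x1 x2 u =
        (τ * (τ ^ 2 - 1 - u)) • (1 : A) + ((u - 1) * (τ ^ 2 - 1 - u)) • x1 +
          (τ * (u * (u - 1))) • x2 := by
    intro u hu x1 x2
    have h1 : τ * (τ ^ 2 - 1 - u) * (τ⁻¹ * (u - 1)) = (u - 1) * (τ ^ 2 - 1 - u) := by
      field_simp
    have h2 : τ * (τ ^ 2 - 1 - u) * (u * (u - 1) / (τ ^ 2 - 1 - u)) = τ * (u * (u - 1)) := by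
      field_simp
    simp only [Rmat, smul_add, smul_smul, h1, h2]
  have key :
      ((τ * (τ ^ 2 - 1 - w)) • (1 : A) + ((w - 1) * (τ ^ 2 - 1 - w)) • a1 +
          (τ * (w * (w - 1))) • a2) *
        ((τ * (τ ^ 2 - 1 - w * z)) • (1 : A) + ((w * z - 1) * (τ ^ 2 - 1 - w * z)) • b1 +
          (τ * (w * z * (w * z - 1))) • b2) *
        ((τ * (τ ^ 2 - 1 - z)) • (1 : A) + ((z - 1) * (τ ^ 2 - 1 - z)) • a1 +
          (τ * (z * (z - 1)))  • a2) =
      ((τ * (τ ^ 2 - 1 - z)) • (1 : A) + ((z - 1) * (τ ^ 2 - 1 - z)) • b1 +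
          (τ * (z * (z - 1))) • b2) *
        ((τ * (τ ^ 2 - 1 - w * z)) • (1 : A) + ((w * z - 1) * (τ ^ 2 - 1 - w * z)) • a1 +
          (τ * (w * z * (w * z - 1))) • a2) *
        ((τ * (τ ^ 2 - 1 - w)) • (1 : A) + ((w - 1) * (τ ^ 2 - 1 - w)) • b1 +
          (τ * (w * (w - 1))) • b2) := by
    simp only [mul_add, add_mul, one_mul, mul_one, mul_assoc, smul_mul_assoc,
      mul_smul_comm, smul_smul, smul_add]
    simp only [ha11, ha12, ha21, ha22, hb11, hb12, hb21, hb22, hba1,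
      L11, L12, L13, L14, L21, L22, L23, L24, R11, R12, R13, R14, R21, R22, R23, R24,
      smul_smul, mul_smul_comm, smul_mul_assoc]
    clear ha11 ha12 ha21 ha22 hb11 hb12 hb21 hb22 hcomm haba1 haba2 hbab1 hbab2
    clear h111 h121 h111' h121' hba1 L11 L12 L13 L14 L21 L22 L23 L24
    clear R11 R12 R13 R14 R21 R22 R23 R24
    match_scalars <;> ring
  refine smul_cancel_aux
    ((τ * (τ ^ 2 - 1 - w)) * (τ * (τ ^ 2 - 1 - w * z)) * (τ * (τ ^ 2 - 1 - z))) _ _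
    (mul_ne_zero (mul_ne_zero (mul_ne_zero hτ hw) (mul_ne_zero hτ hwz))
      (mul_ne_zero hτ hz)) ?_
  calc ((τ * (τ ^ 2 - 1 - w)) * (τ * (τ ^ 2 - 1 - w * z)) * (τ * (τ ^ 2 - 1 - z))) •
        (Rmat τ a1 a2 w * Rmat τ b1 b2 (w * z) * Rmat τ a1 a2 z)
      = ((τ * (τ ^ 2 - 1 - w)) • Rmat τ a1 a2 w) *
          ((τ * (τ ^ 2 - 1 - w * z)) • Rmat τ b1 b2 (w * z)) *
          ((τ * (τ ^ 2 - 1 - z)) • Rmat τ a1 a2 z) := by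
        simp only [smul_mul_assoc, mul_smul_comm, smul_smul]
        match_scalars
        ring
    _ = ((τ * (τ ^ 2 - 1 - z)) • Rmat τ b1 b2 z) *
          ((τ * (τ ^ 2 - 1 - w * z)) • Rmat τ a1 a2 (w * z)) *
          ((τ * (τ ^ 2 - 1 - w)) • Rmat τ b1 b2 w) := by
        rw [expand w hw, expand (w * z) hwz, expand z hz, expand z hz, expand (w * z) hwz,
          expand w hw]
        exact key
    _ = ((τ * (τ ^ 2 - 1 - w)) * (τ * (τ ^ 2 - 1 - w * z)) * (τ * (τ ^ 2 - 1 - z))) •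
          (Rmat τ b1 b2 z * Rmat τ a1 a2 (w * z) * Rmat τ b1 b2 w) := by
        simp only [smul_mul_assoc, mul_smul_comm, smul_smul]
        match_scalars
        ring
end
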